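/- arXiv:2509.16657 — 9 statements merged into one kernel-verified Lean document; each statement's English description precedes it below -/
import Mathlib

section
/- Let G = C(α₁,...,α_{2k}) with k ≥ 2 and α_{2k} = 1. Then the eccentric graph G^e is connected, and hence the eccentricity matrix ε(G) is irreducible. -/
open Finset Matrix

/-- The cograph `C(α₁,…,α_l)` obtained by the recursive construction
`C(α₁) = complement of K_{α₁}` and
`C(α₁,…,αᵢ) = complement of (C(α₁,…,αᵢ₋₁) ⊔ K_{αᵢ})`,
presented by its resulting explicit adjacency relation: two distinct vertices
in the same (0-based) block `i` are adjacent iff `l - 1 - i` is odd, and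
vertices in different blocks `a < b` are adjacent iff `l - 1 - b` is even. -/
def Cgraph (l : ℕ) (α : Fin l → ℕ) : SimpleGraph (Σ i : Fin l, Fin (α i)) where
  Adj u v := u ≠ v ∧ ((u.1 = v.1 ∧ Odd (l - 1 - u.1.val)) ∨
      (u.1 ≠ v.1 ∧ Even (l - 1 - max u.1.val v.1.val)))
  symm := by
    constructor
    rintro u v ⟨h1, h2⟩
    refine ⟨h1.symm, ?_⟩
    rcases h2 with ⟨he, ho⟩ | ⟨hne, hev⟩
    · exact Or.inl ⟨he.symm, he ▸ ho⟩
    · exact Or.inr ⟨hne.symm, by rwa [max_comm]⟩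
  loopless := by constructor; rintro u ⟨h, -⟩; exact h rfl

/-- The eccentricity of a vertex: the largest distance from it to any vertex. -/
noncomputable def ecc {V : Type*} [Fintype V] (G : SimpleGraph V) (v : V) : ℕ :=
  Finset.univ.sup fun u => G.dist v u

/-- The eccentricity matrix: entry `d(u,v)` if `d(u,v) = min (e u) (e v)`, else `0`. -/
noncomputable def eccMatrix {V : Type*} [Fintype V] (G : SimpleGraph V) :
    Matrix V V ℝ :=
  Matrix.of fun u v =>
    if G.dist u v = min (ecc G u) (ecc G v) then (G.dist u v : ℝ) else 0

/-- The eccentric graph `G^e`: `u ∼ v` iff `d(u,v) = min (e u) (e v)` for `u ≠ v`. -/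
noncomputable def eccGraph {V : Type*} [Fintype V] (G : SimpleGraph V) : SimpleGraph V where
  Adj u v := u ≠ v ∧ G.dist u v = min (ecc G u) (ecc G v)
  symm := by
    constructor
    rintro u v ⟨h1, h2⟩
    exact ⟨h1.symm, by rwa [SimpleGraph.dist_comm, min_comm]⟩
  loopless := by constructor; rintro u ⟨h, -⟩; exact h rfl

/-- A square matrix is irreducible if there is no nonempty proper subset `S` of
the index set with all entries from `S` to its complement equal to zero
(equivalently, no simultaneous permutation of rows and columns brings the matrix
to a nontrivial block upper-triangular form). -/
def MatIrreducible {n : Type*} (M : Matrix n n ℝ) : Prop :=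
  ¬ ∃ S : Set n, S.Nonempty ∧ Sᶜ.Nonempty ∧ ∀ u ∈ S, ∀ v ∈ Sᶜ, M u v = 0

/-!
The last block of `C(α₁,…,α_{2k})` is joined to every earlier block, so when `α_{2k} = 1` its
single vertex `w` dominates `G`. Then `e(w) = 1` while every other vertex has eccentricity at
least `1 = d(w, v)`, so `w` is adjacent to every vertex in `G^e` as well. An edge of `G^e`
carries the positive entry `d(u, v)` of `ε(G)`, so a connected `G^e` rules out any zero
off-diagonal block.
-/

open SimpleGraph

theorem SimpleGraph.connected_of_forall_adj {V : Type*} {H : SimpleGraph V} {w : V}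
    (hw : ∀ v ≠ w, H.Adj w v) : H.Connected := by
  have : Nonempty V := ⟨w⟩
  have hreach : ∀ v, H.Reachable w v := fun v => by
    rcases eq_or_ne v w with rfl | hv
    · exact Reachable.refl v
    · exact (hw v hv).reachable
  exact ⟨fun u v => (hreach u).symm.trans (hreach v)⟩

section Eccentricity

variable {V : Type*} [Fintype V] {G : SimpleGraph V}

theorem dist_le_ecc (u v : V) : G.dist u v ≤ ecc G u :=
  Finset.le_sup (mem_univ v)

theorem ecc_eq_one_of_forall_adj {w v : V} (hw : ∀ v ≠ w, G.Adj w v) (hv : v ≠ w) :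
    ecc G w = 1 := by
  refine le_antisymm (Finset.sup_le fun u _ => ?_) ?_
  · by_cases hu : u = w
    · simp [hu]
    · exact (dist_eq_one_iff_adj.mpr (hw u hu)).le
  · exact (dist_eq_one_iff_adj.mpr (hw v hv)).symm.le.trans (dist_le_ecc w v)

theorem eccGraph_adj_of_forall_adj {w : V} (hw : ∀ v ≠ w, G.Adj w v) {v : V} (hv : v ≠ w) :
    (eccGraph G).Adj w v := by
  have hwv : G.dist w v = 1 := dist_eq_one_iff_adj.mpr (hw v hv)
  have hecc_v : 1 ≤ ecc G v := by
    rw [← hwv, SimpleGraph.dist_comm]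
    exact dist_le_ecc v w
  refine ⟨hv.symm, ?_⟩
  rw [hwv, ecc_eq_one_of_forall_adj hw hv, min_eq_left hecc_v]

theorem eccMatrix_ne_zero_of_eccGraph_adj (hG : G.Preconnected) {u v : V}
    (h : (eccGraph G).Adj u v) : eccMatrix G u v ≠ 0 := by
  have hpos : 0 < G.dist u v := (hG u v).pos_dist_of_ne h.1
  rw [eccMatrix, of_apply, if_pos h.2]
  exact_mod_cast hpos.ne'

theorem matIrreducible_eccMatrix (hG : G.Preconnected) (he : (eccGraph G).Preconnected) :
    MatIrreducible (eccMatrix G) := by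
  rintro ⟨S, ⟨u, hu⟩, ⟨v, hv⟩, hzero⟩
  obtain ⟨d, -, hd, hd'⟩ := (he u v).some.exists_boundary_dart S hu hv
  exact eccMatrix_ne_zero_of_eccGraph_adj hG d.adj (hzero _ hd _ hd')

end Eccentricity

theorem Cgraph_adj_of_fst_eq_last {l : ℕ} {α : Fin l → ℕ} {j : Fin l} (hj : j.val = l - 1)
    {u v : Σ i : Fin l, Fin (α i)} (hu : u.1 = j) (hv : v.1 ≠ j) : (Cgraph l α).Adj u v := by
  have hmax : max u.1.val v.1.val = l - 1 := by
    have := v.1.isLt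
    have : v.1.val ≠ j.val := Fin.val_ne_of_ne hv
    omega
  refine ⟨fun h => hv (h ▸ hu), Or.inr ⟨hu ▸ hv.symm, ?_⟩⟩
  rw [hmax, Nat.sub_self]
  exact Even.zero

theorem Cgraph_eq_of_fst_eq {l : ℕ} {α : Fin l → ℕ} {j : Fin l} (hj : α j = 1)
    {u v : Σ i : Fin l, Fin (α i)} (hu : u.1 = j) (hv : v.1 = j) : u = v := by
  obtain ⟨a, x⟩ := u
  obtain ⟨b, y⟩ := v
  dsimp only at hu hv
  subst hu hv
  have hx : x.val < 1 := hj ▸ x.isLt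
  have hy : y.val < 1 := hj ▸ y.isLt
  exact congrArg (Sigma.mk _) (Fin.ext (by omega))

theorem stmt1_general (k : ℕ) (α : Fin (2*k) → ℕ)
    (j : Fin (2*k)) (hj : j.val = 2*k - 1) (hlast : α j = 1) :
    (eccGraph (Cgraph (2*k) α)).Connected ∧
    MatIrreducible (eccMatrix (Cgraph (2*k) α)) := by
  let w : Σ i : Fin (2*k), Fin (α i) := ⟨j, ⟨0, by omega⟩⟩
  have hdom : ∀ v ≠ w, (Cgraph (2*k) α).Adj w v := fun v hv =>
    Cgraph_adj_of_fst_eq_last hj rfl fun hvj => hv (Cgraph_eq_of_fst_eq hlast hvj rfl)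
  have he : (eccGraph (Cgraph (2*k) α)).Connected :=
    connected_of_forall_adj fun v hv => eccGraph_adj_of_forall_adj hdom hv
  exact ⟨he, matIrreducible_eccMatrix (connected_of_forall_adj hdom).preconnected he.preconnected⟩

/-- If `G = C(α₁,…,α_{2k})` with `k ≥ 2` and `α_{2k} = 1`, then the eccentric
graph `G^e` is connected, hence the eccentricity matrix `ε(G)` is irreducible. -/
theorem stmt1 (k : ℕ) (hk : 2 ≤ k) (α : Fin (2*k) → ℕ) (hα : ∀ i, 1 ≤ α i)
    (j : Fin (2*k)) (hj : j.val = 2*k - 1) (hlast : α j = 1) :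
    (eccGraph (Cgraph (2*k) α)).Connected ∧
    MatIrreducible (eccMatrix (Cgraph (2*k) α)) :=
  stmt1_general k α j hj hlast
end

section
/- Let G = C(α₁,...,α_{2k}) with k ≥ 2 and α_{2k} ≥ 2. Then the eccentric graph G^e is disconnected, and hence the eccentricity matrix ε(G) is reducible. -/
/-!
In `G = C(α₁,…,α_{2k})` the last block is an independent set adjacent to every other vertex,
so `G` is a join and in particular connected. No vertex of `G` is dominating: the last block
has at least two vertices, and the block of `α_{2k-1}` is anticomplete to all earlier blocks.
So every eccentricity is at least `2`, whereas the join edges have length `1`; hence no edge of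
`G^e` leaves the last block, and the indicator of a component of `G^e` exhibits the reducibility
of `ε(G)`.
-/

open Finset Matrix

namespace SimpleGraph

variable {V : Type*} {G : SimpleGraph V}

theorem connected_of_forall_adj_compl {S : Set V} (hS : ∀ u ∈ S, ∀ v ∉ S, G.Adj u v)
    {s t : V} (hs : s ∈ S) (ht : t ∉ S) : G.Connected := by
  have hreach : ∀ v, G.Reachable s v := fun v => by
    by_cases hv : v ∈ S
    · exact (hS s hs t ht).reachable.trans (hS v hv t ht).symm.reachable
    · exact (hS s hs v hv).reachable
  exact { preconnected := fun u v => (hreach u).symm.trans (hreach v), nonempty := ⟨s⟩ }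

theorem not_preconnected_of_forall_not_adj {S : Set V} (hS : ∀ u ∈ S, ∀ v ∉ S, ¬ G.Adj u v)
    {s t : V} (hs : s ∈ S) (ht : t ∉ S) : ¬ G.Preconnected := fun h => by
  obtain ⟨d, -, hd₁, hd₂⟩ := (h s t).some.exists_boundary_dart S hs ht
  exact hS _ hd₁ _ hd₂ d.adj

end SimpleGraph

section Eccentricity

variable {V : Type*} [Fintype V] {G : SimpleGraph V}

theorem two_le_ecc_of_not_adj (hG : G.Connected) {u v : V} (hne : u ≠ v)
    (hnadj : ¬ G.Adj u v) : 2 ≤ ecc G u := by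
  have hdist₀ : G.dist u v ≠ 0 := fun h => hne ((hG u v).dist_eq_zero_iff.mp h)
  have hdist₁ : G.dist u v ≠ 1 := fun h => hnadj (SimpleGraph.dist_eq_one_iff_adj.mp h)
  calc 2 ≤ G.dist u v := by omega
    _ ≤ ecc G u := Finset.le_sup (f := fun w => G.dist u w) (Finset.mem_univ v)

theorem eccGraph_not_adj_of_adj {u v : V} (hu : 2 ≤ ecc G u) (hv : 2 ≤ ecc G v)
    (h : G.Adj u v) : ¬ (eccGraph G).Adj u v := by
  rintro ⟨-, hdist⟩
  rw [SimpleGraph.dist_eq_one_iff_adj.mpr h] at hdist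
  omega

theorem eccMatrix_apply_eq_zero_of_not_adj {u v : V} (hne : u ≠ v)
    (h : ¬ (eccGraph G).Adj u v) : eccMatrix G u v = 0 :=
  if_neg fun hdist => h ⟨hne, hdist⟩

theorem not_matIrreducible_eccMatrix_of_not_preconnected
    (h : ¬ (eccGraph G).Preconnected) : ¬ MatIrreducible (eccMatrix G) := by
  obtain ⟨s, t, hst⟩ : ∃ s t, ¬ (eccGraph G).Reachable s t := by
    simpa [SimpleGraph.Preconnected] using h
  refine not_not.mpr ⟨{v | (eccGraph G).Reachable s v}, ⟨s, .rfl⟩, ⟨t, hst⟩, ?_⟩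
  intro u hu v hv
  refine eccMatrix_apply_eq_zero_of_not_adj (fun huv => hv (huv ▸ hu)) fun hadj => hv ?_
  exact hu.trans hadj.reachable

theorem not_preconnected_eccGraph_of_forall_adj_compl {S : Set V}
    (hS : ∀ u ∈ S, ∀ v ∉ S, G.Adj u v) {s t : V} (hs : s ∈ S) (ht : t ∉ S)
    (hnondom : ∀ u, ∃ v, u ≠ v ∧ ¬ G.Adj u v) : ¬ (eccGraph G).Preconnected := by
  have hG := SimpleGraph.connected_of_forall_adj_compl hS hs ht
  have hecc : ∀ u, 2 ≤ ecc G u := fun u => by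
    obtain ⟨v, hne, hnadj⟩ := hnondom u
    exact two_le_ecc_of_not_adj hG hne hnadj
  exact SimpleGraph.not_preconnected_of_forall_not_adj
    (fun u hu v hv => eccGraph_not_adj_of_adj (hecc u) (hecc v) (hS u hu v hv)) hs ht

end Eccentricity

namespace Cgraph

variable {l : ℕ} {α : Fin l → ℕ} {u v : Σ i : Fin l, Fin (α i)}

theorem adj_of_fst_eq_last {j : Fin l} (hj : (j : ℕ) = l - 1) (hu : u.1 = j) (hv : v.1 ≠ j) :
    (Cgraph l α).Adj u v := by
  refine ⟨fun h => hv (h ▸ hu), .inr ⟨hu ▸ Ne.symm hv, ?_⟩⟩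
  have hmax : l - 1 - max (u.1 : ℕ) v.1 = 0 := by
    have := v.1.isLt
    rw [hu, hj]
    omega
  rw [hmax]
  exact Even.zero

theorem not_adj_of_fst_eq_last {j : Fin l} (hj : (j : ℕ) = l - 1) (hu : u.1 = j)
    (hv : v.1 = j) : ¬ (Cgraph l α).Adj u v := by
  rintro ⟨-, ⟨-, hodd⟩ | ⟨hne, -⟩⟩
  · rw [hu, hj, Nat.sub_self] at hodd
    exact Nat.not_odd_zero hodd
  · exact hne (hu.trans hv.symm)

theorem not_adj_of_lt_penultimate (hv : (v.1 : ℕ) + 2 = l) (huv : (u.1 : ℕ) < v.1) :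
    ¬ (Cgraph l α).Adj u v := by
  rintro ⟨-, ⟨heq, -⟩ | ⟨-, heven⟩⟩
  · exact huv.ne (congrArg Fin.val heq)
  · rw [max_eq_right huv.le, show l - 1 - v.1 = 1 by omega] at heven
    exact Nat.not_even_one heven

theorem exists_ne_not_adj (hl : 3 ≤ l) (hα : ∀ i, 1 ≤ α i) {j : Fin l}
    (hj : (j : ℕ) = l - 1) (hlast : 2 ≤ α j) (u : Σ i : Fin l, Fin (α i)) :
    ∃ v, u ≠ v ∧ ¬ (Cgraph l α).Adj u v := by
  obtain ⟨a, x⟩ := u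
  by_cases haj : a = j
  · subst haj
    have : Nontrivial (Fin (α a)) := Fin.nontrivial_iff_two_le.mpr hlast
    obtain ⟨y, hyx⟩ := exists_ne x
    exact ⟨⟨a, y⟩, fun h => hyx (sigma_mk_injective h).symm,
      not_adj_of_fst_eq_last hj rfl rfl⟩
  have ha_lt : (a : ℕ) + 1 < l - 1 + 1 := by
    have := a.isLt
    have : (a : ℕ) ≠ l - 1 := fun h => haj (Fin.ext (h.trans hj.symm))
    omega
  by_cases hpen : (a : ℕ) + 2 = l
  · let b : Fin l := ⟨0, by omega⟩
    refine ⟨⟨b, ⟨0, hα b⟩⟩, fun h => ?_, fun h => ?_⟩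
    · have := congrArg (fun w => (w.1 : ℕ)) h
      simp only [b] at this
      omega
    · exact not_adj_of_lt_penultimate hpen (by simp only [b]; omega) h.symm
  · let b : Fin l := ⟨l - 2, by omega⟩
    refine ⟨⟨b, ⟨0, hα b⟩⟩, fun h => ?_, not_adj_of_lt_penultimate (by simp only [b]; omega)
      (by simp only [b]; omega)⟩
    have := congrArg (fun w => (w.1 : ℕ)) h
    simp only [b] at this
    omega

end Cgraph

/-- If `G = C(α₁,…,α_{2k})` with `k ≥ 2` and `α_{2k} ≥ 2`, then the eccentric
graph `G^e` is disconnected, hence the eccentricity matrix `ε(G)` is reducible. -/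
theorem stmt2 (k : ℕ) (hk : 2 ≤ k) (α : Fin (2*k) → ℕ) (hα : ∀ i, 1 ≤ α i)
    (j : Fin (2*k)) (hj : j.val = 2*k - 1) (hlast : 2 ≤ α j) :
    ¬ (eccGraph (Cgraph (2*k) α)).Connected ∧
    ¬ MatIrreducible (eccMatrix (Cgraph (2*k) α)) := by
  let b : Fin (2*k) := ⟨0, by omega⟩
  have hbj : b ≠ j := fun h => by
    have := congrArg Fin.val h
    simp only [b] at this
    omega
  have hdisc : ¬ (eccGraph (Cgraph (2*k) α)).Preconnected :=
    not_preconnected_eccGraph_of_forall_adj_compl (S := {v | v.1 = j})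
      (fun _ hu _ hv => Cgraph.adj_of_fst_eq_last hj hu hv)
      (s := ⟨j, ⟨0, hα j⟩⟩) rfl (t := ⟨b, ⟨0, hα b⟩⟩) hbj
      (Cgraph.exists_ne_not_adj (by omega) hα hj hlast)
  exact ⟨fun h => hdisc h.preconnected,
    not_matIrreducible_eccMatrix_of_not_preconnected hdisc⟩
end

section
/- Let G = C(α₁,...,α_{2k}) with k ≥ 2 and α_{2k} ≥ 2. Then 2(α_{2k} - 1) is an eigenvalue of ε(G), with eigenvector equal to the indicator vector of the last block V_{2k}. -/
open Finset Matrix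

/-!
The last block `V_{2k}` is an independent set joined to every other vertex, so two of its
vertices are at distance 2 (through any outside vertex) and each of them has eccentricity 2.
Every other vertex has a non-neighbour, hence eccentricity at least 2, so the distance-1
entries between `V_{2k}` and the rest are not eccentric and vanish in `ε(G)`. The row of `ε(G)`
at a vertex of `V_{2k}` therefore sums to `2(|V_{2k}| - 1)` over `V_{2k}`, and any other row
sums to `0` there.
-/

namespace SimpleGraph

variable {V : Type*} {G : SimpleGraph V}

lemma dist_le_two_of_adj_of_adj {u v w : V} (huw : G.Adj u w) (hwv : G.Adj w v) :
    G.dist u v ≤ 2 :=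
  G.dist_le (.cons huw hwv.toWalk)

lemma dist_eq_two_of_adj_of_adj {u v w : V} (hne : u ≠ v) (hnadj : ¬G.Adj u v)
    (huw : G.Adj u w) (hwv : G.Adj w v) : G.dist u v = 2 :=
  le_antisymm (dist_le_two_of_adj_of_adj huw hwv)
    (Reachable.one_lt_dist_of_ne_of_not_adj ⟨.cons huw hwv.toWalk⟩ hne hnadj)

section Join

variable {p : V → Prop}

lemma connected_of_join {u w : V} (hu : p u) (hw : ¬p w)
    (hjoin : ∀ u v, p u → ¬p v → G.Adj u v) : G.Connected := by
  refine (connected_iff_exists_forall_reachable G).mpr ⟨w, fun v => ?_⟩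
  by_cases hv : p v
  · exact (hjoin v w hv hw).symm.reachable
  · exact (hjoin u w hu hw).symm.reachable.trans (hjoin u v hu hv).reachable

lemma dist_eq_two_of_join {u v w : V} (hu : p u) (hv : p v) (hw : ¬p w) (hne : u ≠ v)
    (hindep : ∀ u v, p u → p v → ¬G.Adj u v) (hjoin : ∀ u v, p u → ¬p v → G.Adj u v) :
    G.dist u v = 2 :=
  dist_eq_two_of_adj_of_adj hne (hindep u v hu hv) (hjoin u w hu hw) (hjoin v w hv hw).symm

end Join

variable [Fintype V]

lemma dist_le_ecc (u v : V) : G.dist u v ≤ ecc G u :=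
  Finset.le_sup (Finset.mem_univ v)

lemma ecc_le_iff {u : V} {n : ℕ} : ecc G u ≤ n ↔ ∀ v, G.dist u v ≤ n := by
  simp [ecc]

lemma Connected.two_le_ecc {u w : V} (hG : G.Connected) (hne : u ≠ w) (hnadj : ¬G.Adj u w) :
    2 ≤ ecc G u :=
  (hG.one_lt_dist_of_ne_of_not_adj hne hnadj).trans_le (dist_le_ecc u w)

@[simp]
lemma eccMatrix_apply_self (u : V) : eccMatrix G u u = 0 := by
  simp [eccMatrix]

lemma eccMatrix_apply_of_ecc_le {u v : V} (hu : ecc G u ≤ G.dist u v) :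
    eccMatrix G u v = G.dist u v := by
  have hv : G.dist u v ≤ ecc G v := dist_comm (G := G) ▸ dist_le_ecc v u
  rw [eccMatrix, of_apply, if_pos]
  exact le_antisymm (le_min (dist_le_ecc u v) hv) (min_le_of_left_le hu)

lemma eccMatrix_apply_eq_zero_of_adj {u v : V} (h : G.Adj u v) (hu : 2 ≤ ecc G u)
    (hv : 2 ≤ ecc G v) : eccMatrix G u v = 0 := by
  rw [eccMatrix, of_apply, dist_eq_one_iff_adj.mpr h, if_neg]
  omega

section Join

variable {p : V → Prop}

lemma ecc_eq_two_of_join {u v w : V} (hu : p u) (hv : p v) (hw : ¬p w) (hne : u ≠ v)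
    (hindep : ∀ u v, p u → p v → ¬G.Adj u v) (hjoin : ∀ u v, p u → ¬p v → G.Adj u v) :
    ecc G u = 2 := by
  refine le_antisymm (ecc_le_iff.mpr fun x => ?_) ?_
  · by_cases hx : p x
    · exact dist_le_two_of_adj_of_adj (hjoin u w hu hw) (hjoin x w hx hw).symm
    · exact (dist_eq_one_iff_adj.mpr (hjoin u x hu hx)).trans_le one_le_two
  · exact (dist_eq_two_of_join hu hv hw hne hindep hjoin).symm.trans_le (dist_le_ecc u v)

theorem eccMatrix_mulVec_indicator_of_join [DecidablePred p] {w : V} (hw : ¬p w)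
    (hcard : 2 ≤ #{v | p v}) (hindep : ∀ u v, p u → p v → ¬G.Adj u v)
    (hjoin : ∀ u v, p u → ¬p v → G.Adj u v)
    (hnonadj : ∀ v, ¬p v → ∃ x, x ≠ v ∧ ¬G.Adj v x) :
    eccMatrix G *ᵥ (fun v => if p v then (1 : ℝ) else 0) =
      ((2 * (#{v | p v} - 1) : ℕ) : ℝ) • fun v => if p v then (1 : ℝ) else 0 := by
  classical
  obtain ⟨u₀, hu₀⟩ := Finset.card_pos.mp (zero_lt_two.trans_le hcard)
  have hecc_in : ∀ u, p u → ecc G u = 2 := fun u hu => by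
    obtain ⟨v, hv, hne⟩ := Finset.exists_mem_ne hcard u
    exact ecc_eq_two_of_join hu ((mem_filter_univ v).mp hv) hw hne.symm hindep hjoin
  have hecc_out : ∀ v, ¬p v → 2 ≤ ecc G v := fun v hv => by
    obtain ⟨x, hne, hx⟩ := hnonadj v hv
    exact (connected_of_join ((mem_filter_univ u₀).mp hu₀) hw hjoin).two_le_ecc hne.symm hx
  ext u
  have hrow : (eccMatrix G *ᵥ fun v => if p v then (1 : ℝ) else 0) u =
      ∑ v ∈ {v | p v}, eccMatrix G u v := by
    simp [mulVec, dotProduct, Finset.sum_filter]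
  rw [hrow]
  by_cases hu : p u
  · have hoff : ∀ v ∈ ({v | p v} : Finset V).erase u, eccMatrix G u v = 2 := fun v hv => by
      obtain ⟨hne, hv⟩ := mem_erase.mp hv
      have hdist := dist_eq_two_of_join hu ((mem_filter_univ v).mp hv) hw hne.symm hindep hjoin
      rw [eccMatrix_apply_of_ecc_le (hecc_in u hu ▸ hdist.ge), hdist, Nat.cast_ofNat]
    rw [← add_sum_erase _ _ ((mem_filter_univ u).mpr hu), eccMatrix_apply_self, zero_add,
      sum_congr rfl hoff, sum_const, card_erase_of_mem ((mem_filter_univ u).mpr hu)]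
    simp [hu, mul_comm]
  · refine (sum_eq_zero fun v hv => ?_).trans (by simp [hu])
    have hv := (mem_filter_univ v).mp hv
    exact eccMatrix_apply_eq_zero_of_adj (hjoin v u hv hu).symm (hecc_out u hu) (hecc_in v hv).ge

end Join

end SimpleGraph

section Cgraph

variable {l : ℕ} {α : Fin l → ℕ} {j : Fin l}

lemma cgraph_adj_of_fst_eq_last (hj : j.val = l - 1) {u v : Σ i : Fin l, Fin (α i)}
    (hu : u.1 = j) (hv : v.1 ≠ j) : (Cgraph l α).Adj u v := by
  have hne : u.1 ≠ v.1 := hu ▸ hv.symm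
  have hmax : max u.1.val v.1.val = l - 1 := by
    have := v.1.isLt
    omega
  exact ⟨fun h => hne (congrArg Sigma.fst h), Or.inr ⟨hne, by simp [hmax]⟩⟩

lemma cgraph_not_adj_of_fst_eq_last (hj : j.val = l - 1) {u v : Σ i : Fin l, Fin (α i)}
    (hu : u.1 = j) (hv : v.1 = j) : ¬(Cgraph l α).Adj u v := by
  rintro ⟨-, ⟨-, hodd⟩ | ⟨hne, -⟩⟩
  · simp [hu, hj] at hodd
  · exact hne (hu.trans hv.symm)

lemma cgraph_exists_not_adj (hl : 3 ≤ l) (hα : ∀ i, 1 ≤ α i) {v : Σ i : Fin l, Fin (α i)}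
    (hv : v.1.val ≠ l - 1) : ∃ w, w ≠ v ∧ ¬(Cgraph l α).Adj v w := by
  -- distinct blocks whose larger index is `l - 2` are not joined
  let b : Fin l := ⟨if v.1.val = l - 2 then 0 else l - 2, by split <;> omega⟩
  have hb : b ≠ v.1 := fun h => by
    have := congrArg Fin.val h
    simp only [b] at this
    split at this <;> omega
  have hmax : max v.1.val b.val = l - 2 := by
    have := v.1.isLt
    simp only [b]
    split <;> omega
  refine ⟨⟨b, ⟨0, hα b⟩⟩, fun h => hb (congrArg Sigma.fst h), ?_⟩
  rintro ⟨-, ⟨he, -⟩ | ⟨-, hev⟩⟩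
  · exact hb he.symm
  · rw [hmax, show l - 1 - (l - 2) = 1 by omega] at hev
    exact Nat.not_even_one hev

end Cgraph

/-- For `G = C(α₁,…,α_{2k})` with `k ≥ 2`, `α_{2k} ≥ 2`, the indicator vector of
the last block `V_{2k}` is an eigenvector of `ε(G)` for the eigenvalue
`2(α_{2k} - 1)`; in particular `2(α_{2k}-1)` is an eigenvalue of `ε(G)`. -/
theorem stmt6 (k : ℕ) (hk : 2 ≤ k) (α : Fin (2*k) → ℕ) (hα : ∀ i, 1 ≤ α i)
    (j : Fin (2*k)) (hj : j.val = 2*k - 1) (hlast : 2 ≤ α j) :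
    (eccMatrix (Cgraph (2*k) α)).mulVec
        (fun v : Σ i : Fin (2*k), Fin (α i) => if v.1 = j then (1 : ℝ) else 0) =
      ((2 * (α j - 1) : ℕ) : ℝ) •
        (fun v : Σ i : Fin (2*k), Fin (α i) => if v.1 = j then (1 : ℝ) else 0) ∧
    (fun v : Σ i : Fin (2*k), Fin (α i) => if v.1 = j then (1 : ℝ) else 0) ≠ 0 := by
  have hcard : #{v : Σ i : Fin (2*k), Fin (α i) | v.1 = j} = α j := by
    rw [← Fintype.card_subtype, Fintype.card_congr (Equiv.sigmaSubtype j), Fintype.card_fin]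
  have hw : (⟨0, by omega⟩ : Fin (2*k)) ≠ j := by
    simp only [ne_eq, Fin.ext_iff, hj]
    omega
  refine ⟨?_, fun h => by simpa using congrFun h ⟨j, ⟨0, by omega⟩⟩⟩
  rw [← hcard]
  exact SimpleGraph.eccMatrix_mulVec_indicator_of_join (w := ⟨_, ⟨0, hα _⟩⟩) hw (hcard ▸ hlast)
    (fun u v hu hv => cgraph_not_adj_of_fst_eq_last hj hu hv)
    (fun u v hu hv => cgraph_adj_of_fst_eq_last hj hu hv)
    (fun v hv => cgraph_exists_not_adj (by omega) hα (fun h => hv (Fin.ext (h.trans hj.symm))))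
end

section
/- Let G = C(α₁,...,α_{2k}) with k ≥ 2 and α_{2k} ≥ 2, and let Q̃ be the (2k-1)×(2k-1) quotient matrix of ε(G). Then 0 is an eigenvalue of Q̃ if and only if α₂ = 1, and when α₂ = 1 it is a simple eigenvalue (rank Q̃ = 2k - 2). -/
/-! With 0-based indices write `u m = α_{2m} x_{2m}` and `v m = α_{2m+1} x_{2m+1}`. The even rows
of `Q̃ x = 0` say that `u 0 = ∑ u` and `u (m + 1) = u m + v m`; the odd rows say that the partial
sum `P m = u 1 + ⋯ + u m` equals `(α_{2m+1} - 1) x_{2m+1}`, a nonnegative multiple of `v m`. For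
the first `m` with `P m ≠ 0` we have `u m = P m`, and this common sign passes to `v m`, hence to
`u (m + 1)` and `P (m + 1)`, and so on up to `P (k - 1) = ∑ u - u 0 = 0`, which is absurd.
Hence every coordinate but the first two vanishes and `α_0 x_0 + α_1 x_1 = 0`: the kernel lies on
one line, and the vector spanning it is in the kernel exactly when `α_1 = 1`. -/

open Finset Matrix

/-- The quotient matrix `Q̃` of the eccentricity matrix of `C(α₁,…,α_{2k})`
with respect to the first `2k-1` blocks (indices here are 0-based; the paper's
row/column `r` is `r-1` here, so paper-odd rows correspond to even `i`). -/
noncomputable def Qtilde (k : ℕ) (α : Fin (2*k) → ℕ) :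
    Matrix (Fin (2*k-1)) (Fin (2*k-1)) ℝ :=
  Matrix.of fun i j =>
    let a : Fin (2*k-1) → ℝ := fun m => (α (Fin.castLE (by omega) m) : ℝ)
    if i.val % 2 = 0 then
      if j.val % 2 = 0 then (if i = j then 0 else 2 * a j)
      else (if j.val < i.val then 2 * a j else 0)
    else
      if i = j then 2 * (a i - 1)
      else if j.val % 2 = 0 ∧ i.val < j.val then 2 * a j else 0

section SignPropagation

variable {R : Type*} [CommRing R] [LinearOrder R] [IsStrictOrderedRing R]
  {n : ℕ} {c : ℕ → R}

theorem pos_sum_of_partialSum_eq_mul {u v : ℕ → R} (hc : ∀ m < n, 0 ≤ c m)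
    (hrec : ∀ m < n, u (m + 1) = u m + v m)
    (hP : ∀ m < n, ∑ i ∈ range m, u (i + 1) = c m * v m)
    {m : ℕ} (hmn : m ≤ n) (hu : 0 < u m) (hPm : 0 < ∑ i ∈ range m, u (i + 1)) :
    0 < ∑ i ∈ range n, u (i + 1) := by
  suffices ∀ j, m ≤ j → j ≤ n → 0 < u j ∧ 0 < ∑ i ∈ range j, u (i + 1) from
    (this n hmn le_rfl).2
  intro j hmj
  induction j, hmj using Nat.le_induction with
  | base => exact fun _ => ⟨hu, hPm⟩
  | succ j _ ih =>
    intro hjn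
    obtain ⟨huj, hPj⟩ := ih (by omega)
    have hv : 0 < v j := pos_of_mul_pos_right (hP j hjn ▸ hPj) (hc j hjn)
    have hu' : 0 < u (j + 1) := hrec j hjn ▸ add_pos huj hv
    exact ⟨hu', by rw [sum_range_succ]; exact add_pos hPj hu'⟩

theorem eq_zero_of_partialSum_eq_mul {u v : ℕ → R} (hc : ∀ m < n, 0 ≤ c m)
    (hrec : ∀ m < n, u (m + 1) = u m + v m)
    (hP : ∀ m < n, ∑ i ∈ range m, u (i + 1) = c m * v m)
    (hn : ∑ i ∈ range n, u (i + 1) = 0) {m : ℕ} (hm : m < n) : u (m + 1) = 0 := by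
  have hneg_rec : ∀ m < n, -u (m + 1) = -u m + -v m := fun m hm => by
    rw [hrec m hm, neg_add]
  have hneg_P : ∀ m < n, ∑ i ∈ range m, -u (i + 1) = c m * -v m := fun m hm => by
    rw [sum_neg_distrib, hP m hm, mul_neg]
  have hzero : ∀ j ≤ n, ∑ i ∈ range j, u (i + 1) = 0 := by
    intro j
    induction j with
    | zero => simp
    | succ j ih =>
      intro hj
      rw [sum_range_succ, ih (by omega), zero_add]
      rcases lt_trichotomy (u (j + 1)) 0 with h | h | h
      · have := pos_sum_of_partialSum_eq_mul (u := fun i => -u i) hc hneg_rec hneg_P hj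
          (neg_pos.2 h) (by simpa [sum_range_succ, ih (by omega)] using h)
        rw [sum_neg_distrib, hn, neg_zero] at this
        exact absurd this (lt_irrefl 0)
      · exact h
      · have := pos_sum_of_partialSum_eq_mul hc hrec hP hj h
          (by rw [sum_range_succ, ih (by omega), zero_add]; exact h)
        exact absurd hn this.ne'
  have := hzero (m + 1) hm
  rwa [sum_range_succ, hzero m hm.le, zero_add] at this

end SignPropagation

theorem Finset.sum_range_two_mul {M : Type*} [AddCommMonoid M] (f : ℕ → M) (n : ℕ) :
    ∑ j ∈ range (2 * n), f j = ∑ i ∈ range n, (f (2 * i) + f (2 * i + 1)) := by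
  induction n with
  | zero => simp
  | succ n ih =>
    rw [mul_add, mul_one, sum_range_succ, sum_range_succ, sum_range_succ, ih, add_assoc]

theorem Finset.range_filter_lt {m n : ℕ} (h : m ≤ n) : {i ∈ range n | i < m} = range m := by
  ext i
  simp only [mem_filter, mem_range]
  omega

namespace Qtilde

variable {k : ℕ} (α : Fin (2*k) → ℕ) (x : Fin (2*k-1) → ℝ)

/- `weight` and `coord` extend `α` and `x` to all of `ℕ` (by `1` and by `0`), so that rows and
columns can be addressed as `2 * m` and `2 * m + 1` without bound proofs. -/
noncomputable def weight (m : ℕ) : ℝ := if h : m < 2*k then α ⟨m, h⟩ else 1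

noncomputable def coord (m : ℕ) : ℝ := if h : m < 2*k-1 then x ⟨m, h⟩ else 0

noncomputable def entry (i j : ℕ) : ℝ :=
  if i % 2 = 0 then
    if j % 2 = 0 then (if i = j then 0 else 2 * weight α j)
    else (if j < i then 2 * weight α j else 0)
  else
    if i = j then 2 * (weight α i - 1)
    else if j % 2 = 0 ∧ i < j then 2 * weight α j else 0

noncomputable def evenTerm (i : ℕ) : ℝ := weight α (2 * i) * coord x (2 * i)

noncomputable def oddTerm (i : ℕ) : ℝ := weight α (2 * i + 1) * coord x (2 * i + 1)

theorem weight_of_lt {m : ℕ} (h : m < 2*k) : weight α m = α ⟨m, h⟩ := dif_pos h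

theorem one_le_weight (hα : ∀ i, 1 ≤ α i) (m : ℕ) : 1 ≤ weight α m := by
  unfold weight
  split_ifs
  · exact_mod_cast hα _
  · exact le_rfl

theorem weight_pos (hα : ∀ i, 1 ≤ α i) (m : ℕ) : 0 < weight α m :=
  zero_lt_one.trans_le (one_le_weight α hα m)

theorem coord_of_lt {m : ℕ} (h : m < 2*k-1) : coord x m = x ⟨m, h⟩ := dif_pos h

theorem coord_of_le {m : ℕ} (h : 2*k-1 ≤ m) : coord x m = 0 := dif_neg (by omega)

theorem apply_eq_entry (i j : Fin (2*k-1)) : Qtilde k α i j = entry α i j := by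
  rw [entry, weight_of_lt α (by omega : (i : ℕ) < 2*k), weight_of_lt α (by omega : (j : ℕ) < 2*k)]
  simp only [Qtilde, of_apply, Fin.ext_iff]
  rfl

section Entries

variable (m i : ℕ)

theorem entry_even_even : entry α (2*m) (2*i) = if i = m then 0 else 2 * weight α (2*i) := by
  unfold entry
  split_ifs <;> first | rfl | omega

theorem entry_even_odd : entry α (2*m) (2*i+1) = if i < m then 2 * weight α (2*i+1) else 0 := by
  unfold entry
  split_ifs <;> first | rfl | omega

theorem entry_odd_even : entry α (2*m+1) (2*i) = if m < i then 2 * weight α (2*i) else 0 := by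
  unfold entry
  split_ifs <;> first | rfl | omega

theorem entry_odd_odd :
    entry α (2*m+1) (2*i+1) = if i = m then 2 * (weight α (2*m+1) - 1) else 0 := by
  unfold entry
  split_ifs <;> first | rfl | omega

end Entries

theorem mulVec_apply (i : Fin (2*k-1)) :
    (Qtilde k α *ᵥ x) i = ∑ j ∈ range k,
      (entry α i (2*j) * coord x (2*j) + entry α i (2*j+1) * coord x (2*j+1)) := by
  rw [← sum_range_two_mul (fun j => entry α i j * coord x j), mulVec, dotProduct,
    ← sum_subset (range_subset_range.2 (Nat.sub_le _ _)) fun j hj hj' => by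
      rw [coord_of_le x (by simpa using hj'), mul_zero],
    ← Fin.sum_univ_eq_sum_range (fun j => entry α i j * coord x j)]
  simp [apply_eq_entry, coord_of_lt]

theorem mulVec_even {m : ℕ} (hm : m < k) :
    (Qtilde k α *ᵥ x) ⟨2*m, by omega⟩ = 2 * (∑ i ∈ range k, evenTerm α x i - evenTerm α x m
      + ∑ i ∈ range m, oddTerm α x i) := by
  have hsplit : ∀ i, entry α (2*m) (2*i) * coord x (2*i)
      + entry α (2*m) (2*i+1) * coord x (2*i+1)
      = 2 * evenTerm α x i - (if i = m then 2 * evenTerm α x i else 0)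
        + (if i < m then 2 * oddTerm α x i else 0) := fun i => by
    rw [entry_even_even, entry_even_odd, evenTerm, oddTerm]
    split_ifs <;> ring
  rw [mulVec_apply, sum_congr rfl fun i _ => hsplit i, sum_add_distrib, sum_sub_distrib,
    sum_ite_eq', if_pos (mem_range.2 hm), ← sum_filter, range_filter_lt hm.le, ← mul_sum,
    ← mul_sum]
  ring

theorem mulVec_odd {m : ℕ} (hm : m + 1 < k) :
    (Qtilde k α *ᵥ x) ⟨2*m+1, by omega⟩ = 2 * ((weight α (2*m+1) - 1) * coord x (2*m+1)
      + (∑ i ∈ range k, evenTerm α x i - ∑ i ∈ range (m+1), evenTerm α x i)) := by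
  have hsplit : ∀ i, entry α (2*m+1) (2*i) * coord x (2*i)
      + entry α (2*m+1) (2*i+1) * coord x (2*i+1)
      = 2 * evenTerm α x i - (if i < m + 1 then 2 * evenTerm α x i else 0)
        + (if m = i then 2 * ((weight α (2*m+1) - 1) * coord x (2*m+1)) else 0) := fun i => by
    rw [entry_odd_even, entry_odd_odd, evenTerm]
    split_ifs <;> (try subst_vars) <;> first | omega | ring
  rw [mulVec_apply, sum_congr rfl fun i _ => hsplit i, sum_add_distrib, sum_sub_distrib,
    sum_ite_eq, if_pos (mem_range.2 (by omega)), ← sum_filter, range_filter_lt hm.le, ← mul_sum,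
    ← mul_sum]
  ring

theorem coord_eq_zero_of_mulVec_eq_zero (hk : 2 ≤ k) (hα : ∀ i, 1 ≤ α i)
    (hx : Qtilde k α *ᵥ x = 0) :
    (∀ j, 2 ≤ j → coord x j = 0) ∧ weight α 0 * coord x 0 + weight α 1 * coord x 1 = 0 := by
  set u := evenTerm α x
  set v := oddTerm α x
  have hE : ∀ m < k, ∑ i ∈ range k, u i - u m + ∑ i ∈ range m, v i = 0 := fun m hm => by
    have := mulVec_even α x hm
    rw [hx, Pi.zero_apply] at this
    linarith
  have hO : ∀ m, m + 1 < k → (weight α (2*m+1) - 1) * coord x (2*m+1)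
      + (∑ i ∈ range k, u i - ∑ i ∈ range (m+1), u i) = 0 := fun m hm => by
    have := mulVec_odd α x hm
    rw [hx, Pi.zero_apply] at this
    linarith
  have hS : ∑ i ∈ range k, u i = u 0 := by simpa [sub_eq_zero] using hE 0 (by omega)
  have hrec : ∀ m < k - 1, u (m + 1) = u m + v m := fun m hm => by
    have h₁ := hE m (by omega)
    have h₂ := hE (m + 1) (by omega)
    rw [sum_range_succ] at h₂
    linarith
  have hu : ∀ m < k - 1, u (m + 1) = 0 := by
    refine fun m hm => eq_zero_of_partialSum_eq_mul
      (c := fun m => (weight α (2*m+1) - 1) / weight α (2*m+1))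
      (fun m _ => div_nonneg (sub_nonneg.2 (one_le_weight α hα _)) (weight_pos α hα _).le)
      hrec (fun m hm => ?_) ?_ hm
    · have h := hO m (by omega)
      rw [sum_range_succ'] at h
      simp only [v, oddTerm]
      field_simp [(weight_pos α hα (2*m+1)).ne']
      linarith
    · rw [← add_sub_cancel_right (∑ i ∈ range (k-1), u (i+1)) (u 0), ← sum_range_succ' u,
        Nat.sub_add_cancel (by omega), hS, sub_self]
  have hcoord : ∀ {j}, weight α j * coord x j = 0 → coord x j = 0 := fun h =>
    (mul_eq_zero.1 h).resolve_left (weight_pos α hα _).ne'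
  refine ⟨fun j hj => ?_, ?_⟩
  · rcases le_or_gt (2*k-1) j with hjk | hjk
    · exact coord_of_le x hjk
    obtain ⟨m, rfl | rfl⟩ := Nat.even_or_odd' j
    · obtain ⟨m, rfl⟩ : ∃ m', m = m' + 1 := ⟨m - 1, by omega⟩
      exact hcoord (hu m (by omega))
    · obtain ⟨m, rfl⟩ : ∃ m', m = m' + 1 := ⟨m - 1, by omega⟩
      have := hrec (m + 1) (by omega)
      rw [hu (m + 1) (by omega), hu m (by omega), zero_add] at this
      exact hcoord this.symm
  · simpa [u, v, evenTerm, oddTerm] using (hrec 0 (by omega)).symm.trans (hu 0 (by omega))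

noncomputable def kerVec (hk : 2 ≤ k) : Fin (2*k-1) → ℝ :=
  Pi.single ⟨1, by omega⟩ 1 - (weight α 1 / weight α 0) • Pi.single ⟨0, by omega⟩ 1

theorem kerVec_ne_zero (hk : 2 ≤ k) : kerVec α hk ≠ 0 := fun h => by
  simpa [kerVec, Pi.single_apply, Fin.ext_iff] using congrFun h ⟨1, by omega⟩

theorem mulVec_kerVec (hk : 2 ≤ k) (hα : ∀ i, 1 ≤ α i) :
    Qtilde k α *ᵥ kerVec α hk = Pi.single ⟨1, by omega⟩ (2 * (weight α 1 - 1)) := by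
  have hw := (weight_pos α hα 0).ne'
  ext ⟨i, hi⟩
  rw [kerVec, mulVec_sub, mulVec_smul, mulVec_single_one, mulVec_single_one]
  simp only [Pi.sub_apply, Pi.smul_apply, col_apply, apply_eq_entry, entry, Pi.single_apply,
    Fin.ext_iff, smul_eq_mul]
  split_ifs <;> (try subst_vars) <;> first | contradiction | omega | (field_simp; ring)

theorem mulVec_kerVec_eq_zero_iff (hk : 2 ≤ k) (hα : ∀ i, 1 ≤ α i) :
    Qtilde k α *ᵥ kerVec α hk = 0 ↔ weight α 1 = 1 := by
  rw [mulVec_kerVec α hk hα, Pi.single_eq_zero_iff]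
  simp only [mul_eq_zero, two_ne_zero, false_or, sub_eq_zero]

theorem eq_smul_kerVec_of_mulVec_eq_zero (hk : 2 ≤ k) (hα : ∀ i, 1 ≤ α i)
    (hx : Qtilde k α *ᵥ x = 0) : x = x ⟨1, by omega⟩ • kerVec α hk := by
  obtain ⟨hzero, h01⟩ := coord_eq_zero_of_mulVec_eq_zero α x hk hα hx
  rw [coord_of_lt x (by omega), coord_of_lt x (by omega)] at h01
  ext ⟨j, hj⟩
  simp only [kerVec, Pi.smul_apply, Pi.sub_apply, Pi.single_apply, Fin.ext_iff, smul_eq_mul]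
  rcases (by omega : j = 0 ∨ j = 1 ∨ 2 ≤ j) with rfl | rfl | h2
  · norm_num
    field_simp [(weight_pos α hα 0).ne']
    linarith
  · simp
  · simpa [show j ≠ 0 by omega, show j ≠ 1 by omega, coord_of_lt x hj] using hzero j h2

theorem ker_mulVecLin_eq_span (hk : 2 ≤ k) (hα : ∀ i, 1 ≤ α i)
    (h : Qtilde k α *ᵥ kerVec α hk = 0) :
    LinearMap.ker (Qtilde k α).mulVecLin = Submodule.span ℝ {kerVec α hk} := by
  refine le_antisymm (fun x hx => ?_) ?_
  · rw [Submodule.mem_span_singleton]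
    exact ⟨_, (eq_smul_kerVec_of_mulVec_eq_zero α x hk hα hx).symm⟩
  · rw [Submodule.span_le, Set.singleton_subset_iff]
    exact h

end Qtilde

/-- `0` is an eigenvalue of `Q̃` iff `α₂ = 1`, and in that case it is a simple
eigenvalue: `rank Q̃ = 2k - 2`. -/
theorem stmt8 (k : ℕ) (hk : 2 ≤ k) (α : Fin (2*k) → ℕ) (hα : ∀ i, 1 ≤ α i) :
    ((∃ x : Fin (2*k-1) → ℝ, x ≠ 0 ∧ (Qtilde k α).mulVec x = 0) ↔
      α ⟨1, by omega⟩ = 1) ∧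
    (α ⟨1, by omega⟩ = 1 → (Qtilde k α).rank = 2*k - 2) := by
  have hw : Qtilde.weight α 1 = 1 ↔ α ⟨1, by omega⟩ = 1 := by
    rw [Qtilde.weight_of_lt α (by omega), Nat.cast_eq_one]
  rw [← hw, ← Qtilde.mulVec_kerVec_eq_zero_iff α hk hα]
  refine ⟨⟨fun ⟨x, hx0, hx⟩ => ?_, fun h => ⟨_, Qtilde.kerVec_ne_zero α hk, h⟩⟩, fun h => ?_⟩
  · have hx' := Qtilde.eq_smul_kerVec_of_mulVec_eq_zero α x hk hα hx
    have hx1 : x ⟨1, by omega⟩ ≠ 0 := fun h => hx0 (by rw [hx', h, zero_smul])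
    rw [hx', mulVec_smul] at hx
    exact (smul_eq_zero.1 hx).resolve_left hx1
  · have := LinearMap.finrank_range_add_finrank_ker (Qtilde k α).mulVecLin
    rw [Qtilde.ker_mulVecLin_eq_span α hk hα h,
      finrank_span_singleton (Qtilde.kerVec_ne_zero α hk), Module.finrank_fin_fun] at this
    change (Qtilde k α).rank + 1 = 2*k-1 at this
    omega
end

section
/- Let A_{2k-1} be the adjacency matrix of the antiregular graph H_{2k-1} = C(1,1,...,1) on 2k-1 vertices. Then the inertia of A_{2k-1} is (k-1, 1, k-1): it has exactly k-1 negative eigenvalues, one zero eigenvalue, and k-1 positive eigenvalues. -/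
open Finset Matrix

noncomputable instance {l : ℕ} {α : Fin l → ℕ} : DecidableRel (Cgraph l α).Adj :=
  fun _ _ => Classical.dec _

/-!
Label the vertices of `H_{2k-1}` by `0, …, 2k-2`; then `i ≠ j` are adjacent iff `max i j` is
even. Hence for `t < k - 1` the vectors `e_{2t+1} - e_{2t+2}` are orthogonal for the
adjacency form with `xᵀ A x = -2`, and the vectors `2 e_{2t+1} + e_{2t+2}` have Gram matrix
`I + 3J`. A `(k-1)`-dimensional subspace on which the form is negative (positive) definite meets
the span of the eigenvectors with eigenvalue `≥ 0` (`≤ 0`) trivially, so there are at least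
`k - 1` negative and `k - 1` positive eigenvalues. Vertices `0` and `1` are nonadjacent twins
(for `k = 1`, vertex `0` is isolated), so `0` is an eigenvalue as well, and the three counts add
up to `2k - 1`.
-/

section Inertia

variable {ι κ : Type*} [Fintype ι] [Fintype κ]

lemma card_filter_neg_add_card_filter_eq_zero_add_card_filter_pos (f : ι → ℝ) :
    #{i | f i < 0} + #{i | f i = 0} + #{i | 0 < f i} = Fintype.card ι := by
  simp only [card_filter, ← sum_add_distrib, Fintype.card_eq_sum_ones]
  refine sum_congr rfl fun i _ => ?_
  rcases lt_trichotomy (f i) 0 with h | h | h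
  · simp [h, h.ne, h.le.not_gt]
  · simp [h]
  · simp [h, h.ne', h.le.not_gt]

lemma card_le_card_filter_pos_of_sum_mul_sq_pos (ev : ι → ℝ) (Y : (κ → ℝ) →ₗ[ℝ] ι → ℝ)
    (hY : ∀ c ≠ 0, 0 < ∑ i, ev i * Y c i ^ 2) : Fintype.card κ ≤ #{i | 0 < ev i} := by
  by_contra! hlt
  let restrict : (κ → ℝ) →ₗ[ℝ] ({i // 0 < ev i} → ℝ) := LinearMap.funLeft ℝ ℝ Subtype.val ∘ₗ Y
  obtain ⟨c, hc, hc0⟩ := Submodule.exists_mem_ne_zero_of_ne_bot <|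
    LinearMap.ker_ne_bot_of_finrank_lt (f := restrict) (by simpa [Fintype.card_subtype] using hlt)
  have hvanish : ∀ i, 0 < ev i → Y c i = 0 := fun i hi =>
    congrFun (LinearMap.mem_ker.mp hc) ⟨i, hi⟩
  refine (hY c hc0).not_ge (sum_nonpos fun i _ => ?_)
  by_cases hi : 0 < ev i
  · simp [hvanish i hi]
  · exact mul_nonpos_of_nonpos_of_nonneg (not_lt.mp hi) (sq_nonneg _)

end Inertia

section Conjugation

variable {ι κ α : Type*} [Fintype ι]

lemma transpose_mul_mul_apply [NonUnitalSemiring α] (W : Matrix ι κ α) (A : Matrix ι ι α)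
    (t s : κ) : (Wᵀ * A * W) t s = Wᵀ t ⬝ᵥ (A *ᵥ Wᵀ s) := by
  rw [Matrix.mul_assoc]
  simp [mul_apply, dotProduct, mulVec]

lemma dotProduct_mulVec_mulVec_eq_transpose_mul_mul [Fintype κ] [CommSemiring α]
    (A : Matrix ι ι α) (W : Matrix ι κ α) (c : κ → α) :
    (W *ᵥ c) ⬝ᵥ (A *ᵥ (W *ᵥ c)) = c ⬝ᵥ ((Wᵀ * A * W) *ᵥ c) := by
  rw [← mulVec_mulVec, ← mulVec_mulVec, dotProduct_mulVec c, vecMul_transpose,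
    dotProduct_mulVec (W *ᵥ c)]

end Conjugation

namespace Matrix.IsHermitian

variable {ι κ : Type*} [Fintype ι] [DecidableEq ι] [Fintype κ] {A : Matrix ι ι ℝ}
  (hA : A.IsHermitian)

lemma dotProduct_mulVec_eq_sum_eigenvalues_mul_sq (x : ι → ℝ) :
    x ⬝ᵥ (A *ᵥ x) = ∑ i, hA.eigenvalues i * (hA.eigenvectorUnitaryᵀ *ᵥ x) i ^ 2 := by
  conv_lhs => rw [hA.spectral_theorem, Unitary.conjStarAlgAut_apply]
  rw [← mulVec_mulVec, ← mulVec_mulVec, dotProduct_mulVec, ← mulVec_transpose]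
  simp [dotProduct, mulVec_diagonal, sq, mul_left_comm, star_eq_conjTranspose]

lemma card_le_card_filter_eigenvalues_pos {W : Matrix ι κ ℝ} (hW : (Wᵀ * A * W).PosDef) :
    Fintype.card κ ≤ #{i | 0 < hA.eigenvalues i} := by
  refine card_le_card_filter_pos_of_sum_mul_sq_pos _
    (mulVecLin (hA.eigenvectorUnitaryᵀ : Matrix ι ι ℝ) ∘ₗ mulVecLin W) fun c hc => ?_
  rw [LinearMap.comp_apply, mulVecLin_apply, mulVecLin_apply,
    ← hA.dotProduct_mulVec_eq_sum_eigenvalues_mul_sq, dotProduct_mulVec_mulVec_eq_transpose_mul_mul]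
  simpa using hW.dotProduct_mulVec_pos hc

lemma card_le_card_filter_eigenvalues_neg {W : Matrix ι κ ℝ} (hW : (-(Wᵀ * A * W)).PosDef) :
    Fintype.card κ ≤ #{i | hA.eigenvalues i < 0} := by
  simp_rw [← neg_pos (a := hA.eigenvalues _)]
  refine card_le_card_filter_pos_of_sum_mul_sq_pos _
    (mulVecLin (hA.eigenvectorUnitaryᵀ : Matrix ι ι ℝ) ∘ₗ mulVecLin W) fun c hc => ?_
  simp_rw [neg_mul, sum_neg_distrib, neg_pos]
  rw [LinearMap.comp_apply, mulVecLin_apply, mulVecLin_apply,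
    ← hA.dotProduct_mulVec_eq_sum_eigenvalues_mul_sq, dotProduct_mulVec_mulVec_eq_transpose_mul_mul]
  simpa [neg_mulVec] using hW.dotProduct_mulVec_pos hc

lemma exists_eigenvalues_eq_zero_of_det_eq_zero (hdet : A.det = 0) :
    ∃ i, hA.eigenvalues i = 0 := by
  simpa [hA.det_eq_prod_eigenvalues, prod_eq_zero_iff] using hdet

end Matrix.IsHermitian

namespace Antiregular

def vertex {l : ℕ} (j : ℕ) (hj : j < l) : Σ _ : Fin l, Fin 1 := ⟨⟨j, hj⟩, 0⟩

lemma vertex_eta {l : ℕ} (v : Σ _ : Fin l, Fin 1) : vertex v.1 v.1.isLt = v := by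
  obtain ⟨i, x⟩ := v
  obtain rfl := Subsingleton.elim x 0
  rfl

variable {k : ℕ}

lemma cgraph_adj_vertex_vertex_iff {i j : ℕ} (hi : i < 2*k-1) (hj : j < 2*k-1) :
    (Cgraph (2*k-1) fun _ => 1).Adj (vertex i hi) (vertex j hj) ↔ i ≠ j ∧ Even (max i j) := by
  simp only [Cgraph, vertex, ne_eq, Sigma.mk.injEq, Fin.mk.injEq, heq_eq_eq, and_true,
    Nat.even_iff, Nat.odd_iff]
  omega

lemma adjMatrix_vertex_vertex {i j : ℕ} (hi : i < 2*k-1) (hj : j < 2*k-1) :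
    (Cgraph (2*k-1) fun _ => 1).adjMatrix ℝ (vertex i hi) (vertex j hj)
      = if i ≠ j ∧ Even (max i j) then 1 else 0 := by
  simp only [SimpleGraph.adjMatrix_apply, cgraph_adj_vertex_vertex_iff]

lemma det_adjMatrix_eq_zero (hk : 1 ≤ k) :
    ((Cgraph (2*k-1) fun _ => 1).adjMatrix ℝ).det = 0 := by
  obtain rfl | hk2 : k = 1 ∨ 2 ≤ k := by omega
  · refine det_eq_zero_of_row_eq_zero (vertex 0 (by norm_num)) fun v => ?_
    rw [← vertex_eta v, adjMatrix_vertex_vertex]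
    simp only [Nat.lt_one_iff.mp v.1.isLt, ne_eq, not_true_eq_false, false_and, if_false]
  · refine det_zero_of_row_eq (i := vertex 0 (by omega)) (j := vertex 1 (by omega))
      (by simp [vertex]) (funext fun v => ?_)
    rw [← vertex_eta v, adjMatrix_vertex_vertex, adjMatrix_vertex_vertex]
    simp only [Nat.even_iff]
    exact if_congr (by omega) rfl rfl

def negativeWitness (k : ℕ) : Matrix (Σ _ : Fin (2*k-1), Fin 1) (Fin (k-1)) ℝ :=
  (of fun t => Pi.single (vertex (2*t+1) (by omega)) 1 - Pi.single (vertex (2*t+2) (by omega)) 1)ᵀ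

def positiveWitness (k : ℕ) : Matrix (Σ _ : Fin (2*k-1), Fin 1) (Fin (k-1)) ℝ :=
  (of fun t => Pi.single (vertex (2*t+1) (by omega)) 2 + Pi.single (vertex (2*t+2) (by omega)) 1)ᵀ

lemma negativeWitness_transpose_apply (t : Fin (k-1)) :
    (negativeWitness k)ᵀ t
      = Pi.single (vertex (2*t+1) (by omega)) 1 - Pi.single (vertex (2*t+2) (by omega)) 1 :=
  rfl

lemma positiveWitness_transpose_apply (t : Fin (k-1)) :
    (positiveWitness k)ᵀ t
      = Pi.single (vertex (2*t+1) (by omega)) 2 + Pi.single (vertex (2*t+2) (by omega)) 1 :=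
  rfl

lemma gram_negativeWitness :
    (negativeWitness k)ᵀ * (Cgraph (2*k-1) fun _ => 1).adjMatrix ℝ * negativeWitness k
      = -diagonal fun _ => 2 := by
  ext t s
  rw [transpose_mul_mul_apply]
  simp only [negativeWitness_transpose_apply, dotProduct_mulVec, dotProduct_sub,
    dotProduct_single, sub_vecMul, Pi.sub_apply, single_vecMul, Pi.smul_apply, row_apply,
    smul_eq_mul, adjMatrix_vertex_vertex, Matrix.neg_apply, diagonal_apply, Fin.ext_iff,
    Nat.even_iff, mul_one, one_mul]
  split_ifs <;> first | (exfalso; omega) | norm_num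

lemma gram_positiveWitness :
    (positiveWitness k)ᵀ * (Cgraph (2*k-1) fun _ => 1).adjMatrix ℝ * positiveWitness k
      = 1 + (3 : ℝ) • vecMulVec 1 (star 1) := by
  ext t s
  rw [transpose_mul_mul_apply]
  simp only [positiveWitness_transpose_apply, dotProduct_mulVec, dotProduct_add,
    dotProduct_single, add_vecMul, Pi.add_apply, single_vecMul, Pi.smul_apply, row_apply,
    smul_eq_mul, adjMatrix_vertex_vertex, Matrix.add_apply, one_apply, Matrix.smul_apply,
    vecMulVec_apply, Fin.ext_iff, Nat.even_iff]
  split_ifs <;> first | (exfalso; omega) | norm_num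

lemma posDef_neg_gram_negativeWitness :
    (-((negativeWitness k)ᵀ * (Cgraph (2*k-1) fun _ => 1).adjMatrix ℝ
      * negativeWitness k)).PosDef := by
  rw [gram_negativeWitness, neg_neg]
  exact .diagonal fun _ => two_pos

lemma posDef_gram_positiveWitness :
    ((positiveWitness k)ᵀ * (Cgraph (2*k-1) fun _ => 1).adjMatrix ℝ
      * positiveWitness k).PosDef := by
  rw [gram_positiveWitness]
  exact PosDef.one.add_posSemidef ((posSemidef_vecMulVec_self_star 1).smul (by norm_num))

end Antiregular

/-- The adjacency matrix of the antiregular graph `H_{2k-1} = C(1,…,1)` on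
`2k-1` vertices has inertia `(k-1, 1, k-1)`. -/
theorem stmt10 (k : ℕ) (hk : 1 ≤ k)
    (hA : (((Cgraph (2*k-1) fun _ => 1).adjMatrix ℝ)).IsHermitian) :
    (Finset.univ.filter fun i => hA.eigenvalues i < 0).card = k - 1 ∧
    (Finset.univ.filter fun i => hA.eigenvalues i = 0).card = 1 ∧
    (Finset.univ.filter fun i => 0 < hA.eigenvalues i).card = k - 1 := by
  have hneg := hA.card_le_card_filter_eigenvalues_neg
    Antiregular.posDef_neg_gram_negativeWitness
  have hpos := hA.card_le_card_filter_eigenvalues_pos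
    Antiregular.posDef_gram_positiveWitness
  obtain ⟨i, hi⟩ := hA.exists_eigenvalues_eq_zero_of_det_eq_zero
    (Antiregular.det_adjMatrix_eq_zero hk)
  have hzero : 0 < #{i | hA.eigenvalues i = 0} := card_pos.mpr ⟨i, by simp [hi]⟩
  have htotal := card_filter_neg_add_card_filter_eq_zero_add_card_filter_pos hA.eigenvalues
  simp only [Fintype.card_fin, Fintype.card_sigma, Fintype.card_unique, sum_const, card_univ,
    smul_eq_mul, mul_one] at hneg hpos htotal
  refine ⟨?_, ?_, ?_⟩ <;> omega
end

section
/- For every positive integer n, every eigenvalue λ of the adjacency matrix A_n of the antiregular graph H_n with λ ∉ {0, -1} satisfies either λ < (-1-√2)/2 or λ > (-1+√2)/2; i.e., the closed interval [(-1-√2)/2, (-1+√2)/2] contains no eigenvalue of A_n other than 0 and -1. -/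
/-!
Read an eigenvector from the dominating vertex downwards, padded by a zero in front, and let
`v t` be its entry at position `2t`. With `r = μ² + μ`, these satisfy
`r (2 v_t - v_{t-1} - v_{t+1}) = v_t` and `v 0 = 0`, so `v t = v 1 · U_{t-1}(x)` for the
Chebyshev polynomial `U` at `x = 1 - 1/(2r)`; the entries at odd positions are `μ`-multiples of
differences of consecutive `v t`, and the bottom of the graph imposes one boundary condition on
the last two `v t`. The interval `[(-1-√2)/2, (-1+√2)/2]` is exactly `r ≤ 1/4`, i.e. `1 ≤ x²`,
where `|U_{m-1}(x)| ≤ |U_m(x)|` and `x U_m(x) U_{m-1}(x) ≥ 0`. This growth makes the boundary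
condition fail unless `v 1 = 0`, and then the whole eigenvector vanishes.
-/

open Finset Matrix

open Polynomial Chebyshev

namespace Polynomial.Chebyshev

theorem U_eval_bounds_of_one_le_sq {x : ℝ} (hx : 1 ≤ x ^ 2) (m : ℕ) :
    0 ≤ x * (U ℝ m).eval x * (U ℝ (m - 1)).eval x ∧
      ((U ℝ (m - 1)).eval x) ^ 2 ≤ ((U ℝ m).eval x) ^ 2 ∧ 1 ≤ ((U ℝ m).eval x) ^ 2 := by
  induction m with
  | zero => simp
  | succ m ih =>
    obtain ⟨hab, hb, ha⟩ := ih
    push_cast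
    rw [add_sub_cancel_right, U_add_one, eval_sub, eval_mul, eval_mul, eval_X, eval_ofNat]
    set a := (U ℝ m).eval x
    set b := (U ℝ (m - 1)).eval x
    have hxab : x * a * b ≤ x ^ 2 * a ^ 2 := by
      nlinarith [sq_nonneg (x * a - b), mul_le_mul_of_nonneg_right hx (sq_nonneg a)]
    have hc : x ^ 2 * a ^ 2 ≤ x * (2 * x * a - b) * a := by nlinarith
    have hsq : x ^ 2 * a ^ 2 ≤ (2 * x * a - b) ^ 2 := by
      have hpos : 0 < x ^ 2 * a ^ 2 := by positivity
      nlinarith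
    exact ⟨by nlinarith, by nlinarith, by nlinarith⟩

theorem eq_mul_U_eval_of_recurrence {x : ℝ} {v : ℕ → ℝ} {K : ℕ} (h0 : v 0 = 0)
    (hrec : ∀ t, t + 2 ≤ K → v (t + 2) = 2 * x * v (t + 1) - v t) :
    ∀ t ≤ K, v t = v 1 * (U ℝ (t - 1)).eval x := by
  suffices ∀ t, t + 1 ≤ K → v t = v 1 * (U ℝ (t - 1)).eval x ∧
      v (t + 1) = v 1 * (U ℝ t).eval x by
    intro t ht
    rcases t with _ | t
    · simp [h0]
    · simpa using (this t ht).2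
  intro t
  induction t with
  | zero => simp [h0]
  | succ t ih =>
    intro ht
    obtain ⟨ih0, ih1⟩ := ih (by omega)
    refine ⟨by simpa using ih1, ?_⟩
    rw [hrec t ht, ih0, ih1]
    push_cast
    rw [U_add_one]
    simp only [eval_sub, eval_mul, eval_X, eval_ofNat]
    ring

end Polynomial.Chebyshev

theorem sq_add_self_le_of_mem_Icc {μ : ℝ} (hμ : μ ∈ Set.Icc ((-1 - √2) / 2) ((-1 + √2) / 2)) :
    μ ^ 2 + μ ≤ 1 / 4 := by
  nlinarith [Real.sq_sqrt (show (0 : ℝ) ≤ 2 by norm_num),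
    mul_nonpos_of_nonneg_of_nonpos (sub_nonneg.2 hμ.1) (sub_nonpos.2 hμ.2)]

theorem sq_add_self_ne_zero {μ : ℝ} (h0 : μ ≠ 0) (h1 : μ ≠ -1) : μ ^ 2 + μ ≠ 0 := by
  rw [sq, ← mul_add_one]
  exact mul_ne_zero h0 (by contrapose! h1; linarith)

/-- Here `a, b` stand for `U_m(x), U_{m-1}(x)`: the two conclusions say that the boundary
condition at the bottom of the graph fails, for even and for odd `n`. -/
theorem boundary_ne {μ a b : ℝ} (h0 : μ ≠ 0) (h1 : μ ≠ -1) (hr : μ ^ 2 + μ ≤ 1 / 4)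
    (hab : (μ ^ 2 + μ) * (a * b) ≤ 0) (hb : b ^ 2 ≤ a ^ 2) (ha : a ≠ 0) :
    μ * (a - b) ≠ a ∧ (μ ^ 2 + μ) * (a - b) ≠ (μ + 2) * a := by
  have ha2 : 0 < a ^ 2 := by positivity
  have hab_le : a * b ≤ a ^ 2 := by nlinarith [sq_nonneg (a - b)]
  have hab_ge : -a ^ 2 ≤ a * b := by nlinarith [sq_nonneg (a + b)]
  rcases (sq_add_self_ne_zero h0 h1).lt_or_gt with hneg | hpos
  · have hμ : -1 < μ ∧ μ < 0 := by constructor <;> nlinarith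
    have hab0 : 0 ≤ a * b := by nlinarith
    constructor <;> intro heq <;> nlinarith [congrArg (· * a) heq]
  · have hab0 : a * b ≤ 0 := by nlinarith
    have hμ : -3 / 2 < μ ∧ μ < 1 / 2 := by constructor <;> nlinarith
    constructor <;> intro heq <;> nlinarith [congrArg (· * a) heq]

section Coordinates

variable {n : ℕ}

/-- `revCoord x q` is the entry of `x` at the vertex `n - q`, so `q = 1` is the dominating
vertex; position `0` is a zero pad. -/
def revCoord (x : (Σ _ : Fin n, Fin 1) → ℝ) (q : ℕ) : ℝ :=
  if h : 0 < q ∧ q ≤ n then x ⟨⟨n - q, by omega⟩, 0⟩ else 0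

theorem revCoord_zero (x : (Σ _ : Fin n, Fin 1) → ℝ) : revCoord x 0 = 0 := by
  simp [revCoord]

theorem revCoord_sub_fst (x : (Σ _ : Fin n, Fin 1) → ℝ) (u : Σ _ : Fin n, Fin 1) :
    revCoord x (n - u.1) = x u := by
  obtain ⟨i, j⟩ := u
  rw [revCoord, dif_pos (by dsimp only; omega), Fin.fin_one_eq_zero j]
  congr
  dsimp only
  omega

theorem cgraph_adj_iff (u v : Σ _ : Fin n, Fin 1) :
    (Cgraph n fun _ => 1).Adj u v ↔ u.1 ≠ v.1 ∧ Even (n - 1 - max u.1.val v.1.val) := by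
  obtain ⟨i, a⟩ := u
  obtain ⟨j, b⟩ := v
  rw [Fin.fin_one_eq_zero a, Fin.fin_one_eq_zero b]
  constructor
  · rintro ⟨hne, ⟨rfl, -⟩ | ⟨hij, hev⟩⟩
    · exact absurd rfl hne
    · exact ⟨hij, hev⟩
  · rintro ⟨hij, hev⟩
    exact ⟨fun h => hij (congrArg Sigma.fst h), Or.inr ⟨hij, hev⟩⟩

theorem sum_sigma_fin_one_sub_fst (g : ℕ → ℝ) (hg : g 0 = 0) :
    ∑ u : Σ _ : Fin n, Fin 1, g (n - u.1) = ∑ q ∈ range (n + 1), g q := by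
  rw [Fintype.sum_sigma]
  simp only [Finset.univ_unique, sum_singleton]
  rw [Fin.sum_univ_eq_sum_range (fun i => g (n - i)), sum_range_succ', hg, add_zero,
    ← sum_range_reflect]
  refine sum_congr rfl fun i hi => ?_
  rw [mem_range] at hi
  congr 1
  omega

theorem sum_range_ite_odd_min (y : ℕ → ℝ) {q : ℕ} (hq : q ≤ n) :
    ∑ q' ∈ range (n + 1), (if q' ≠ q ∧ Odd (min q q') then y q' else 0) =
      ∑ q' ∈ range q, (if Odd q' then y q' else 0) +
        if Odd q then ∑ q' ∈ Ico (q + 1) (n + 1), y q' else 0 := by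
  rw [← sum_range_add_sum_Ico _ (by omega : q ≤ n + 1),
    sum_eq_sum_Ico_succ_bot (by omega : q < n + 1), if_neg (by simp), zero_add]
  congr 1
  · refine sum_congr rfl fun q' hq' => ?_
    have := mem_range.mp hq'
    rw [min_eq_right this.le]
    simp [this.ne]
  · split_ifs with ho
    · refine sum_congr rfl fun q' hq' => ?_
      have := (mem_Ico.mp hq').1
      rw [min_eq_left (by omega), if_pos ⟨by omega, ho⟩]
    · refine sum_eq_zero fun q' hq' => ?_
      have := (mem_Ico.mp hq').1
      rw [min_eq_left (by omega), if_neg (by tauto)]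

end Coordinates

/-- The eigen-equations in the coordinates of `revCoord`: vertex `q` is adjacent to the odd
`q' < q`, and to every `q' > q` when `q` is odd. -/
def IsAntiregularEigenseq (n : ℕ) (μ : ℝ) (y : ℕ → ℝ) : Prop :=
  y 0 = 0 ∧ ∀ q ≤ n, μ * y q = ∑ q' ∈ range q, (if Odd q' then y q' else 0) +
    if Odd q then ∑ q' ∈ Ico (q + 1) (n + 1), y q' else 0

theorem isAntiregularEigenseq_revCoord {n : ℕ} {μ : ℝ} {x : (Σ _ : Fin n, Fin 1) → ℝ}
    (hx : ((Cgraph n fun _ => 1).adjMatrix ℝ).mulVec x = μ • x) :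
    IsAntiregularEigenseq n μ (revCoord x) := by
  refine ⟨revCoord_zero x, fun q hq => ?_⟩
  rcases Nat.eq_zero_or_pos q with rfl | hq0
  · simp [revCoord]
  let v : Σ _ : Fin n, Fin 1 := ⟨⟨n - q, by omega⟩, 0⟩
  have hv := congrFun hx v
  rw [SimpleGraph.adjMatrix_mulVec_apply, SimpleGraph.neighborFinset_eq_filter,
    sum_filter, Pi.smul_apply, smul_eq_mul] at hv
  rw [← sum_range_ite_odd_min _ hq, ← sum_sigma_fin_one_sub_fst _ (by simp),
    revCoord, dif_pos ⟨hq0, hq⟩, ← hv]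
  refine sum_congr rfl fun u _ => ?_
  rw [revCoord_sub_fst]
  refine if_congr ?_ rfl rfl
  have hu := u.1.isLt
  simp only [cgraph_adj_iff, v, ne_eq, Fin.ext_iff, Nat.even_iff, Nat.odd_iff]
  omega

namespace IsAntiregularEigenseq

variable {n : ℕ} {μ : ℝ} {y : ℕ → ℝ}

theorem sub_of_even (h : IsAntiregularEigenseq n μ y) {q : ℕ} (hq : q + 1 ≤ n) (he : Even q) :
    μ * (y (q + 1) - y q) = ∑ q' ∈ Ico (q + 2) (n + 1), y q' := by
  have h1 := h.2 (q + 1) hq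
  have h0 := h.2 q (by omega)
  rw [sum_range_succ, if_neg (Nat.not_odd_iff_even.mpr he), if_pos he.add_one] at h1
  rw [if_neg (Nat.not_odd_iff_even.mpr he)] at h0
  linarith

theorem sub_of_odd (h : IsAntiregularEigenseq n μ y) {q : ℕ} (hq : q + 1 ≤ n) (ho : Odd q) :
    μ * (y (q + 1) - y q) = y q - ∑ q' ∈ Ico (q + 1) (n + 1), y q' := by
  have h1 := h.2 (q + 1) hq
  have h0 := h.2 q (by omega)
  rw [sum_range_succ, if_pos ho, if_neg (Nat.not_odd_iff_even.mpr ho.add_one)] at h1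
  rw [if_pos ho] at h0
  linarith

theorem two_step_of_even (h : IsAntiregularEigenseq n μ y) {q : ℕ} (hq : q + 2 ≤ n)
    (he : Even q) : μ * (y (q + 2) - y q) = y (q + 1) := by
  have h0 := h.sub_of_even (by omega) he
  have h1 := h.sub_of_odd hq he.add_one
  simp only [add_assoc, Nat.reduceAdd] at h1
  linear_combination h0 + h1

theorem two_step_of_odd (h : IsAntiregularEigenseq n μ y) {q : ℕ} (hq : q + 2 ≤ n)
    (ho : Odd q) : (μ + 1) * (y q - y (q + 2)) = y (q + 1) := by
  have h0 := h.sub_of_odd (by omega) ho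
  have h1 := h.sub_of_even hq ho.add_one
  rw [sum_eq_sum_Ico_succ_bot (by omega : q + 1 < n + 1),
    sum_eq_sum_Ico_succ_bot (by omega : q + 1 + 1 < n + 1)] at h0
  simp only [add_assoc, Nat.reduceAdd] at h0 h1
  linear_combination -h0 - h1

theorem last_eq (h : IsAntiregularEigenseq n μ y) (hn : 1 ≤ n) (h0 : μ ≠ 0) (h1 : μ ≠ -1) :
    y n = y (n - 1) := by
  obtain ⟨m, rfl⟩ : ∃ m, n = m + 1 := ⟨n - 1, by omega⟩
  rw [add_tsub_cancel_right]
  rcases Nat.even_or_odd m with he | ho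
  · have := h.sub_of_even le_rfl he
    rw [Ico_eq_empty (by omega), sum_empty, mul_eq_zero] at this
    exact sub_eq_zero.mp (this.resolve_left h0)
  · have := h.sub_of_odd le_rfl ho
    rw [sum_eq_sum_Ico_succ_bot (by omega), Ico_eq_empty (by omega), sum_empty] at this
    have : (μ + 1) * (y (m + 1) - y m) = 0 := by linear_combination this
    exact sub_eq_zero.mp ((mul_eq_zero.mp this).resolve_left (by contrapose! h1; linarith))

theorem three_term (h : IsAntiregularEigenseq n μ y) {t : ℕ} (ht : 2 * t + 4 ≤ n) :
    (μ ^ 2 + μ) * (2 * y (2 * t + 2) - y (2 * t) - y (2 * t + 4)) = y (2 * t + 2) := by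
  have hl := h.two_step_of_even (q := 2 * t) (by omega) (even_two_mul t)
  have hr := h.two_step_of_even (q := 2 * t + 2) ht ((even_two_mul t).add even_two)
  have hm := h.two_step_of_odd (q := 2 * t + 1) (by omega) (odd_two_mul_add_one t)
  simp only [add_assoc, Nat.reduceAdd] at hr hm
  linear_combination (μ + 1) * hl - (μ + 1) * hr + hm

theorem boundary_of_even (h : IsAntiregularEigenseq n μ y) (h0 : μ ≠ 0) (h1 : μ ≠ -1) {m : ℕ}
    (hn : n = 2 * m + 2) : μ * (y (2 * m + 2) - y (2 * m)) = y (2 * m + 2) := by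
  have hlast := h.last_eq (by omega) h0 h1
  rw [hn, show 2 * m + 2 - 1 = 2 * m + 1 by omega] at hlast
  rw [h.two_step_of_even (by omega) (even_two_mul m), hlast]

theorem boundary_of_odd (h : IsAntiregularEigenseq n μ y) (h0 : μ ≠ 0) (h1 : μ ≠ -1) {m : ℕ}
    (hn : n = 2 * m + 3) :
    (μ ^ 2 + μ) * (y (2 * m + 2) - y (2 * m)) = (μ + 2) * y (2 * m + 2) := by
  have hlast := h.last_eq (by omega) h0 h1
  rw [hn, show 2 * m + 3 - 1 = 2 * m + 2 by omega] at hlast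
  have hl := h.two_step_of_even (q := 2 * m) (by omega) (even_two_mul m)
  have hm := h.two_step_of_odd (q := 2 * m + 1) (by omega) (odd_two_mul_add_one m)
  simp only [add_assoc, Nat.reduceAdd] at hm
  linear_combination hm + (μ + 1) * hl + (μ + 1) * hlast

theorem even_eq_mul_U_eval (h : IsAntiregularEigenseq n μ y) (hr0 : μ ^ 2 + μ ≠ 0) {x : ℝ}
    (hx : 2 * (μ ^ 2 + μ) * x = 2 * (μ ^ 2 + μ) - 1) :
    ∀ t ≤ n / 2, y (2 * t) = y 2 * (U ℝ (t - 1)).eval x := by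
  refine eq_mul_U_eval_of_recurrence (v := fun t => y (2 * t)) h.1 fun t ht => ?_
  apply mul_left_cancel₀ hr0
  have := h.three_term (t := t) (by omega)
  simp only [mul_add, Nat.reduceMul]
  linear_combination -this - y (2 * t + 2) * hx

theorem even_eq_zero (h : IsAntiregularEigenseq n μ y) (h0 : μ ≠ 0) (h1 : μ ≠ -1)
    (hr : μ ^ 2 + μ ≤ 1 / 4) : ∀ t ≤ n / 2, y (2 * t) = 0 := by
  have hr0 := sq_add_self_ne_zero h0 h1
  obtain ⟨x, hx⟩ : ∃ x : ℝ, 2 * (μ ^ 2 + μ) * x = 2 * (μ ^ 2 + μ) - 1 :=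
    ⟨(2 * (μ ^ 2 + μ) - 1) / (2 * (μ ^ 2 + μ)), mul_div_cancel₀ _ (by positivity)⟩
  have hx1 : 1 ≤ x ^ 2 := by nlinarith [congrArg (· ^ 2) hx, pow_pos (sq_pos_of_ne_zero hr0) 1]
  have hv := h.even_eq_mul_U_eval hr0 hx
  suffices y 2 = 0 ∨ n / 2 = 0 by
    intro t ht
    rcases this with hy2 | hk
    · rw [hv t ht, hy2, zero_mul]
    · obtain rfl : t = 0 := by omega
      exact h.1
  rcases hk : n / 2 with _ | m
  · exact Or.inr rfl
  left
  obtain ⟨hab, hb, ha⟩ := U_eval_bounds_of_one_le_sq hx1 m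
  set a := (U ℝ m).eval x
  set b := (U ℝ (m - 1)).eval x
  have hya : y (2 * m + 2) = y 2 * a := by simpa [mul_add] using hv (m + 1) (by omega)
  have hyb : y (2 * m) = y 2 * b := hv m (by omega)
  -- `(μ² + μ) x = μ² + μ - 1/2 < 0`, so `x` and `μ² + μ` have opposite signs
  have hrab : (μ ^ 2 + μ) * (a * b) ≤ 0 := by
    have : (μ ^ 2 + μ) * (a * b) * x ^ 2 = (μ ^ 2 + μ - 1 / 2) * (x * a * b) := by
      linear_combination (a * b * x / 2) * hx
    nlinarith [mul_nonpos_of_nonpos_of_nonneg (by linarith : μ ^ 2 + μ - 1 / 2 ≤ 0) hab]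
  obtain ⟨hne_even, hne_odd⟩ := boundary_ne h0 h1 hr hrab hb fun ha0 => by norm_num [ha0] at ha
  rcases Nat.even_or_odd n with ⟨c, hc⟩ | ⟨c, hc⟩
  · have := h.boundary_of_even h0 h1 (m := m) (by omega)
    rw [hya, hyb] at this
    exact (mul_eq_zero.mp (by linear_combination this : y 2 * (μ * (a - b) - a) = 0)).resolve_right
      (sub_ne_zero.mpr hne_even)
  · have := h.boundary_of_odd h0 h1 (m := m) (by omega)
    rw [hya, hyb] at this
    exact (mul_eq_zero.mp (by linear_combination this :
      y 2 * ((μ ^ 2 + μ) * (a - b) - (μ + 2) * a) = 0)).resolve_right (sub_ne_zero.mpr hne_odd)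

theorem eq_zero (h : IsAntiregularEigenseq n μ y) (h0 : μ ≠ 0) (h1 : μ ≠ -1)
    (hr : μ ^ 2 + μ ≤ 1 / 4) : ∀ q ≤ n, y q = 0 := by
  have heven := h.even_eq_zero h0 h1 hr
  intro q hq
  obtain ⟨t, rfl | rfl⟩ := Nat.even_or_odd' q
  · exact heven t (by omega)
  · rcases Nat.lt_or_ge (2 * t + 1) n with hlt | hge
    · rw [← h.two_step_of_even (by omega) (even_two_mul t), show 2 * t + 2 = 2 * (t + 1) by ring,
        heven t (by omega), heven (t + 1) (by omega), sub_zero, mul_zero]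
    · obtain rfl : n = 2 * t + 1 := by omega
      rw [h.last_eq (by omega) h0 h1, add_tsub_cancel_right, heven t (by omega)]

end IsAntiregularEigenseq

theorem stmt11_general (n : ℕ) (μ : ℝ)
    (hμ : ∃ x : (Σ i : Fin n, Fin 1) → ℝ, x ≠ 0 ∧
      ((Cgraph n fun _ => 1).adjMatrix ℝ).mulVec x = μ • x)
    (h0 : μ ≠ 0) (h1 : μ ≠ -1) :
    μ < (-1 - Real.sqrt 2) / 2 ∨ (-1 + Real.sqrt 2) / 2 < μ := by
  by_contra! hμI
  obtain ⟨x, hx0, hx⟩ := hμ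
  have hy := (isAntiregularEigenseq_revCoord hx).eq_zero h0 h1 (sq_add_self_le_of_mem_Icc hμI)
  exact hx0 (funext fun u => by rw [← revCoord_sub_fst x u, hy _ (Nat.sub_le _ _)]; rfl)

/-- Every eigenvalue `μ ∉ {0, -1}` of the adjacency matrix of the antiregular
graph `H_n = C(1,…,1)` satisfies `μ < (-1-√2)/2` or `μ > (-1+√2)/2`. -/
theorem stmt11 (n : ℕ) (hn : 1 ≤ n) (μ : ℝ)
    (hμ : ∃ x : (Σ i : Fin n, Fin 1) → ℝ, x ≠ 0 ∧
      ((Cgraph n fun _ => 1).adjMatrix ℝ).mulVec x = μ • x)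
    (h0 : μ ≠ 0) (h1 : μ ≠ -1) :
    μ < (-1 - Real.sqrt 2) / 2 ∨ (-1 + Real.sqrt 2) / 2 < μ :=
  stmt11_general n μ hμ h0 h1
end

section
/- For every nonnegative integer n, -1 is not an eigenvalue of the adjacency matrix A_{2n+1} of the antiregular graph on 2n+1 vertices. -/
/-!
Index the vertices by `0, …, 2n`, so that two distinct vertices are adjacent iff the larger one
is even. In the antiregular graph on `2n + 3` vertices, vertex `2n + 1` is adjacent only to
`2n + 2`, which is adjacent to everything. Rows `2n`, `2n + 1`, `2n + 2` of `(A + 1) y = 0` then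
force `y (2n + 1) = y (2n + 2) = 0`, after which the remaining rows are those of the antiregular
graph on `2n + 1` vertices, so `A + 1` has trivial kernel by induction on `n`.
-/

open Finset Matrix

/-- Row `a` of `(A_m + 1) y`. -/
def antiregularAddOneRow {M : Type*} [AddCommMonoid M] (m : ℕ) (y : ℕ → M) (a : ℕ) : M :=
  ∑ b ∈ range m, if a = b ∨ Even (max a b) then y b else 0

section AntiregularAddOneRow

variable {M : Type*} [AddCommGroup M] {m a : ℕ} (y : ℕ → M)

lemma antiregularAddOneRow_succ (m a : ℕ) :
    antiregularAddOneRow (m + 1) y a =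
      antiregularAddOneRow m y a + if a = m ∨ Even (max a m) then y m else 0 :=
  sum_range_succ _ m

lemma antiregularAddOneRow_of_even (ha : Even a) (hm : m ≤ a + 1) :
    antiregularAddOneRow m y a = ∑ b ∈ range m, y b := by
  refine sum_congr rfl fun b hb => if_pos (Or.inr ?_)
  rwa [max_eq_left (by rw [mem_range] at hb; omega)]

lemma antiregularAddOneRow_of_odd (ha : Odd a) (hm : m ≤ a) :
    antiregularAddOneRow m y a = 0 := by
  refine sum_eq_zero fun b hb => if_neg ?_
  rw [mem_range] at hb
  rw [max_eq_left (by omega)]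
  rintro (rfl | h)
  exacts [hb.not_ge hm, Nat.not_even_iff_odd.mpr ha h]

lemma antiregularAddOneRow_add_two_of_lt {n : ℕ} (ha : a < 2 * n + 1) :
    antiregularAddOneRow (2 * n + 3) y a = antiregularAddOneRow (2 * n + 1) y a + y (2 * n + 2) := by
  rw [antiregularAddOneRow_succ, antiregularAddOneRow_succ, if_neg, if_pos, add_zero]
  · exact Or.inr (by rw [max_eq_right (by omega)]; exact ⟨n + 1, by ring⟩)
  · rw [max_eq_right (by omega)]
    rintro (h | h)
    exacts [by omega, Nat.not_even_two_mul_add_one n h]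

lemma antiregularAddOneRow_add_two_self_odd (n : ℕ) :
    antiregularAddOneRow (2 * n + 3) y (2 * n + 1) = y (2 * n + 1) + y (2 * n + 2) := by
  rw [antiregularAddOneRow_succ, antiregularAddOneRow_succ, if_pos (Or.inl rfl), if_pos,
    antiregularAddOneRow_of_odd y (odd_two_mul_add_one n) le_rfl, zero_add]
  exact Or.inr (by rw [max_eq_right (by omega)]; exact ⟨n + 1, by ring⟩)

theorem eq_zero_of_antiregularAddOneRow_eq_zero (n : ℕ)
    (h : ∀ a < 2 * n + 1, antiregularAddOneRow (2 * n + 1) y a = 0) :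
    ∀ a < 2 * n + 1, y a = 0 := by
  induction n with
  | zero =>
    intro a ha
    obtain rfl : a = 0 := by omega
    simpa [antiregularAddOneRow_of_even y Even.zero le_rfl] using h 0 ha
  | succ n ih =>
    rw [show 2 * (n + 1) + 1 = 2 * n + 3 by ring] at h ⊢
    set S := ∑ b ∈ range (2 * n + 1), y b
    have h_mid : y (2 * n + 1) + y (2 * n + 2) = 0 := by
      rw [← antiregularAddOneRow_add_two_self_odd, h _ (by omega)]
    have h_top : S + y (2 * n + 1) + y (2 * n + 2) = 0 := by
      have := h (2 * n + 2) (by omega)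
      rwa [antiregularAddOneRow_of_even y ⟨n + 1, by ring⟩ (by omega), sum_range_succ,
        sum_range_succ] at this
    have h_bottom : S + y (2 * n + 2) = 0 := by
      have := h (2 * n) (by omega)
      rwa [antiregularAddOneRow_add_two_of_lt y (by omega),
        antiregularAddOneRow_of_even y (even_two_mul n) le_rfl] at this
    have h_odd : y (2 * n + 1) = 0 := by
      rw [show y (2 * n + 1) = (S + y (2 * n + 1) + y (2 * n + 2)) - (S + y (2 * n + 2)) by abel,
        h_top, h_bottom, sub_zero]
    have h_even : y (2 * n + 2) = 0 := by rwa [h_odd, zero_add] at h_mid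
    have h_prev (a : ℕ) (ha : a < 2 * n + 1) : antiregularAddOneRow (2 * n + 1) y a = 0 := by
      simpa [antiregularAddOneRow_add_two_of_lt y ha, h_even] using h a (by omega)
    intro a ha
    rcases (by omega : a < 2 * n + 1 ∨ a = 2 * n + 1 ∨ a = 2 * n + 2) with ha | rfl | rfl
    exacts [ih h_prev a ha, h_odd, h_even]

end AntiregularAddOneRow

section AntiregularCgraph

variable {n : ℕ}

lemma cgraph_antiregular_adj_iff (u v : Σ _ : Fin (2 * n + 1), Fin 1) :
    (Cgraph (2 * n + 1) fun _ => 1).Adj u v ↔ u.1 ≠ v.1 ∧ Even (max u.1.val v.1.val) := by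
  obtain ⟨a, i⟩ := u
  obtain ⟨b, j⟩ := v
  obtain rfl := Subsingleton.elim i j
  have hmax : max a.val b.val ≤ 2 * n := by omega
  change _ ∧ (_ ∨ (_ ∧ Even (2 * n + 1 - 1 - _))) ↔ _
  rw [Nat.add_sub_cancel, Nat.even_sub hmax]
  simp only [ne_eq, Sigma.ext_iff, heq_eq_eq, and_true, even_two, Even.mul_right, true_iff]
  tauto

noncomputable def antiregularCoords (x : (Σ _ : Fin (2 * n + 1), Fin 1) → ℝ) (k : ℕ) : ℝ :=
  if h : k < 2 * n + 1 then x ⟨⟨k, h⟩, 0⟩ else 0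

lemma cgraph_antiregular_mulVec_add_self (x : (Σ _ : Fin (2 * n + 1), Fin 1) → ℝ)
    (a : Fin (2 * n + 1)) :
    ((Cgraph (2 * n + 1) fun _ => 1).adjMatrix ℝ *ᵥ x) ⟨a, 0⟩ + x ⟨a, 0⟩ =
      antiregularAddOneRow (2 * n + 1) (antiregularCoords x) a := by
  have h_split (b : Fin (2 * n + 1)) :
      (if a.val = b.val ∨ Even (max a.val b.val) then antiregularCoords x b else 0) =
        (if a ≠ b ∧ Even (max a.val b.val) then x ⟨b, 0⟩ else 0) +
          if a = b then x ⟨b, 0⟩ else 0 := by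
    rw [antiregularCoords, dif_pos b.isLt]
    by_cases hab : a = b <;> simp [hab, Fin.val_inj]
  rw [antiregularAddOneRow, ← Fin.sum_univ_eq_sum_range, sum_congr rfl fun b _ => h_split b,
    sum_add_distrib, sum_ite_eq, if_pos (mem_univ a), mulVec, dotProduct, Fintype.sum_sigma]
  simp [cgraph_antiregular_adj_iff]

end AntiregularCgraph

/-- `-1` is not an eigenvalue of the adjacency matrix of the antiregular graph
on `2n+1` vertices. -/
theorem stmt12 (n : ℕ) :
    ¬ ∃ x : (Σ i : Fin (2*n+1), Fin 1) → ℝ, x ≠ 0 ∧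
      ((Cgraph (2*n+1) fun _ => 1).adjMatrix ℝ).mulVec x = (-1 : ℝ) • x := by
  rintro ⟨x, hx0, hx⟩
  have h_row (a : ℕ) (ha : a < 2 * n + 1) :
      antiregularAddOneRow (2 * n + 1) (antiregularCoords x) a = 0 := by
    rw [← cgraph_antiregular_mulVec_add_self x ⟨a, ha⟩, hx, Pi.smul_apply, neg_one_smul,
      neg_add_cancel]
  refine hx0 (funext fun ⟨a, j⟩ => ?_)
  obtain rfl := Subsingleton.elim j 0
  simpa [antiregularCoords, a.isLt] using
    eq_zero_of_antiregularAddOneRow_eq_zero _ n h_row a a.isLt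
end

section
/- Let G = C(α₁,...,α_{2k}) with k ≥ 2 and α_{2k} ≥ 2. Then ε(G) has at most 2k + 2 distinct eigenvalues. -/
open Finset Matrix

namespace Matrix

theorem mem_spectrum_of_mulVec_eq_smul {K n : Type*} [Field K] [Fintype n] [DecidableEq n]
    {A : Matrix n n K} {μ : K} {x : n → K} (hx : x ≠ 0) (h : A *ᵥ x = μ • x) :
    μ ∈ spectrum K A := by
  rw [← spectrum_toLin', ← Module.End.hasEigenvalue_iff_mem_spectrum]
  exact Module.End.hasEigenvalue_of_hasEigenvector
    ⟨Module.End.mem_eigenspace_iff.mpr (by simpa using h), hx⟩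

variable {K V ι : Type*}

def blockPattern [Ring K] [DecidableEq V] (p : V → ι) (g : ι → ι → K) (d : ι → K) :
    Matrix V V K :=
  of (fun u v => g (p u) (p v)) - diagonal (fun u => d (p u))

/-- The quotient matrix of `blockPattern p g d` for the partition of `V` into fibres of `p`. -/
def blockQuotient [Ring K] [Fintype V] [DecidableEq ι] (p : V → ι) (g : ι → ι → K)
    (d : ι → K) : Matrix ι ι K :=
  of (fun a b => (#{v | p v = a} : K) * g a b) - diagonal d

theorem exists_eq_neg_or_mem_spectrum_blockQuotient [Field K] [Fintype V] [DecidableEq V]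
    [Fintype ι] [DecidableEq ι] {p : V → ι} {g : ι → ι → K} {d : ι → K} {μ : K} {x : V → K}
    (hx : x ≠ 0) (h : blockPattern p g d *ᵥ x = μ • x) :
    (∃ a, μ = -d a) ∨ μ ∈ spectrum K (blockQuotient p g d) := by
  set S : ι → K := fun a => ∑ v with p v = a, x v
  have hrow : ∀ u, ∑ b, g (p u) b * S b - d (p u) * x u = μ * x u := by
    intro u
    have := congrFun h u
    simp only [blockPattern, sub_mulVec, mulVec_diagonal, Pi.sub_apply, Pi.smul_apply,
      smul_eq_mul] at this
    rw [← this]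
    congr 1
    simp only [mulVec, dotProduct, of_apply, S, Finset.mul_sum]
    rw [← Finset.sum_fiberwise univ p]
    refine Finset.sum_congr rfl fun b _ => Finset.sum_congr rfl fun v hv => ?_
    rw [(Finset.mem_filter.mp hv).2]
  by_cases hS : S = 0
  · obtain ⟨u, hu⟩ := Function.ne_iff.mp hx
    left
    refine ⟨p u, mul_right_cancel₀ hu ?_⟩
    have := hrow u
    simp only [hS, Pi.zero_apply, mul_zero, Finset.sum_const_zero, zero_sub] at this
    rw [← this, neg_mul]
  · right
    refine mem_spectrum_of_mulVec_eq_smul hS (funext fun a => ?_)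
    have hsum : ∑ u with p u = a, (∑ b, g a b * S b - d a * x u) = μ * S a := by
      rw [Finset.mul_sum]
      refine Finset.sum_congr rfl fun u hu => ?_
      rw [← (Finset.mem_filter.mp hu).2]
      exact hrow u
    rw [Finset.sum_sub_distrib, Finset.sum_const, ← Finset.mul_sum, nsmul_eq_mul] at hsum
    simp only [blockQuotient, sub_mulVec, mulVec_diagonal, Pi.sub_apply, Pi.smul_apply,
      smul_eq_mul, ← hsum]
    simp [mulVec, dotProduct, S, Finset.mul_sum, mul_assoc]

theorem card_roots_toFinset_charpoly_le {R n : Type*} [CommRing R] [IsDomain R] [DecidableEq R]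
    [Fintype n] [DecidableEq n] (A : Matrix n n R) :
    A.charpoly.roots.toFinset.card ≤ Fintype.card n :=
  (Multiset.toFinset_card_le _).trans <| (Polynomial.card_roots' _).trans
    (charpoly_natDegree_eq_dim A).le

end Matrix

section DiameterTwo

variable {V : Type*} {G : SimpleGraph V}

lemma SimpleGraph.dist_eq_two_iff_compl_adj
    (hcommon : ∀ u v, Gᶜ.Adj u v → ∃ w, G.Adj u w ∧ G.Adj w v) {u v : V} :
    G.dist u v = 2 ↔ Gᶜ.Adj u v := by
  refine ⟨fun h => ⟨?_, ?_⟩, fun h => ?_⟩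
  · rintro rfl
    simp at h
  · intro huv
    simp [SimpleGraph.dist_eq_one_iff_adj.mpr huv] at h
  · obtain ⟨w, huw, hwv⟩ := hcommon u v h
    rw [SimpleGraph.dist, SimpleGraph.edist_eq_two_iff.mpr ⟨h.1, h.2, w, huw, hwv.symm⟩]
    rfl

lemma SimpleGraph.dist_le_two
    (hcommon : ∀ u v, Gᶜ.Adj u v → ∃ w, G.Adj u w ∧ G.Adj w v) (u v : V) :
    G.dist u v ≤ 2 := by
  by_cases h : Gᶜ.Adj u v
  · exact ((G.dist_eq_two_iff_compl_adj hcommon).mpr h).le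
  · rw [SimpleGraph.compl_adj, not_and_not_right] at h
    obtain rfl | huv := eq_or_ne u v
    · simp
    · rw [SimpleGraph.dist_eq_one_iff_adj.mpr (h huv)]
      omega

variable [Fintype V]

lemma ecc_eq_two (hcommon : ∀ u v, Gᶜ.Adj u v → ∃ w, G.Adj u w ∧ G.Adj w v)
    (hfar : ∀ u, ∃ v, Gᶜ.Adj u v) (u : V) : ecc G u = 2 := by
  refine le_antisymm (Finset.sup_le fun v _ => G.dist_le_two hcommon u v) ?_
  obtain ⟨v, huv⟩ := hfar u
  rw [← (G.dist_eq_two_iff_compl_adj hcommon).mpr huv]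
  exact Finset.le_sup (f := G.dist u) (Finset.mem_univ v)

open Classical in
theorem eccMatrix_eq_two_smul_adjMatrix_compl
    (hcommon : ∀ u v, Gᶜ.Adj u v → ∃ w, G.Adj u w ∧ G.Adj w v)
    (hfar : ∀ u, ∃ v, Gᶜ.Adj u v) : eccMatrix G = 2 • Gᶜ.adjMatrix ℝ := by
  ext u v
  have hdist := G.dist_eq_two_iff_compl_adj hcommon (u := u) (v := v)
  rw [eccMatrix, of_apply, ecc_eq_two hcommon hfar, ecc_eq_two hcommon hfar, min_self,
    Matrix.smul_apply, SimpleGraph.adjMatrix_apply]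
  by_cases h : Gᶜ.Adj u v
  · simp [h, hdist.mpr h]
  · simp [h, mt hdist.mp h]

end DiameterTwo

namespace Cgraph

variable {l : ℕ} {α : Fin l → ℕ}

def BlockAdj (l : ℕ) (a b : Fin l) : Prop :=
  (a = b ∧ Odd (l - 1 - a.val)) ∨ (a ≠ b ∧ Even (l - 1 - max a.val b.val))

lemma adj_iff {u v : Σ i : Fin l, Fin (α i)} :
    (Cgraph l α).Adj u v ↔ u ≠ v ∧ BlockAdj l u.1 v.1 := Iff.rfl

lemma adj_of_max_eq {u v : Σ i : Fin l, Fin (α i)} (hne : u.1 ≠ v.1)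
    (hmax : max u.1.val v.1.val = l - 1) : (Cgraph l α).Adj u v :=
  ⟨fun h => hne (congrArg Sigma.fst h), Or.inr ⟨hne, by simp [hmax]⟩⟩

lemma compl_adj_of_max_eq {u v : Σ i : Fin l, Fin (α i)} (hne : u.1 ≠ v.1)
    (hmax : max u.1.val v.1.val + 2 = l) : (Cgraph l α)ᶜ.Adj u v := by
  refine ⟨fun h => hne (congrArg Sigma.fst h), ?_⟩
  rintro ⟨-, ⟨heq, -⟩ | ⟨-, heven⟩⟩
  · exact hne heq
  · rw [show l - 1 - max u.1.val v.1.val = 1 by omega] at heven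
    exact Nat.not_even_one heven

lemma compl_adj_of_fst_eq_last {u v : Σ i : Fin l, Fin (α i)} (hne : u ≠ v)
    (hu : u.1.val + 1 = l) (hv : u.1 = v.1) : (Cgraph l α)ᶜ.Adj u v := by
  refine ⟨hne, ?_⟩
  rintro ⟨-, ⟨-, hodd⟩ | ⟨hne', -⟩⟩
  · rw [show l - 1 - u.1.val = 0 by omega] at hodd
    exact Nat.not_odd_zero hodd
  · exact hne' hv

lemma exists_adj_adj (hl : 2 ≤ l) (hα : ∀ i, 1 ≤ α i) {u v : Σ i : Fin l, Fin (α i)}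
    (h : (Cgraph l α)ᶜ.Adj u v) : ∃ w, (Cgraph l α).Adj u w ∧ (Cgraph l α).Adj w v := by
  have hu := u.1.isLt
  have hv := v.1.isLt
  by_cases hlast : u.1.val + 1 = l ∧ v.1.val + 1 = l
  · let w : Σ i : Fin l, Fin (α i) := ⟨⟨0, by omega⟩, ⟨0, hα _⟩⟩
    refine ⟨w, adj_of_max_eq ?_ ?_, adj_of_max_eq ?_ ?_⟩
    all_goals simp only [w, ne_eq, Fin.ext_iff]; omega
  · let w : Σ i : Fin l, Fin (α i) := ⟨⟨l - 1, by omega⟩, ⟨0, hα _⟩⟩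
    have hbelow : u.1.val + 1 < l ∧ v.1.val + 1 < l := by
      by_cases hfst : u.1 = v.1
      · have := congrArg Fin.val hfst
        omega
      · have : max u.1.val v.1.val ≠ l - 1 := fun hmax => h.2 (adj_of_max_eq hfst hmax)
        omega
    refine ⟨w, adj_of_max_eq ?_ ?_, adj_of_max_eq ?_ ?_⟩
    all_goals simp only [w, ne_eq, Fin.ext_iff]; omega

lemma exists_compl_adj (hl : 3 ≤ l) (hα : ∀ i, 1 ≤ α i) (j : Fin l) (hj : j.val = l - 1)
    (hlast : 2 ≤ α j) (u : Σ i : Fin l, Fin (α i)) : ∃ v, (Cgraph l α)ᶜ.Adj u v := by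
  obtain ⟨i, s⟩ := u
  have hi := i.isLt
  by_cases hij : i = j
  · subst hij
    obtain ⟨t, ht⟩ := Fintype.exists_ne_of_one_lt_card (by simp; omega) s
    exact ⟨⟨i, t⟩,
      compl_adj_of_fst_eq_last (by simpa using ht.symm) (by dsimp only; omega) rfl⟩
  · have hij : i.val + 1 < l := by
      have : i.val ≠ j.val := fun h => hij (Fin.ext h)
      omega
    -- a block `b ≠ i` with `max i b = l - 2`, which exists as `l ≥ 3`
    let b : Fin l := if i.val + 2 = l then ⟨0, by omega⟩ else ⟨l - 2, by omega⟩
    refine ⟨⟨b, ⟨0, hα b⟩⟩, compl_adj_of_max_eq ?_ ?_⟩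
    all_goals simp only [b, ne_eq, Fin.ext_iff]; split_ifs <;> simp <;> omega

open Classical in
noncomputable def blockWeight (l : ℕ) (a b : Fin l) : ℝ := if BlockAdj l a b then 0 else 2

lemma eccMatrix_eq_blockPattern (hl : 3 ≤ l) (hα : ∀ i, 1 ≤ α i) (j : Fin l)
    (hj : j.val = l - 1) (hlast : 2 ≤ α j) :
    eccMatrix (Cgraph l α) =
      blockPattern Sigma.fst (blockWeight l) fun a => blockWeight l a a := by
  classical
  rw [eccMatrix_eq_two_smul_adjMatrix_compl (fun _ _ => exists_adj_adj (by omega) hα)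
    (exists_compl_adj hl hα j hj hlast)]
  ext u v
  by_cases huv : u = v
  · subst huv
    simp [blockPattern]
  · simp [blockPattern, blockWeight, adj_iff, huv]

end Cgraph

/-- `ε(G)` has at most `2k + 2` distinct eigenvalues. -/
theorem stmt16 (k : ℕ) (hk : 2 ≤ k) (α : Fin (2*k) → ℕ) (hα : ∀ i, 1 ≤ α i)
    (j : Fin (2*k)) (hj : j.val = 2*k - 1) (hlast : 2 ≤ α j) :
    ∃ s : Finset ℝ, s.card ≤ 2*k + 2 ∧
      ∀ μ : ℝ, (∃ x : (Σ i : Fin (2*k), Fin (α i)) → ℝ, x ≠ 0 ∧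
          (eccMatrix (Cgraph (2*k) α)).mulVec x = μ • x) → μ ∈ s := by
  classical
  set Q := blockQuotient (Sigma.fst : (Σ i : Fin (2*k), Fin (α i)) → Fin (2*k))
    (Cgraph.blockWeight (2*k)) fun a => Cgraph.blockWeight (2*k) a a
  refine ⟨Q.charpoly.roots.toFinset ∪ {0, -2}, ?_, ?_⟩
  · calc _ ≤ Q.charpoly.roots.toFinset.card + ({0, -2} : Finset ℝ).card := card_union_le _ _
      _ ≤ 2*k + 2 := by
        gcongr
        · simpa using Q.card_roots_toFinset_charpoly_le
        · exact card_le_two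
  · rintro μ ⟨x, hx, hμ⟩
    rw [Cgraph.eccMatrix_eq_blockPattern (by omega) hα j hj hlast] at hμ
    rcases exists_eq_neg_or_mem_spectrum_blockQuotient hx hμ with ⟨a, rfl⟩ | hQ
    · refine mem_union_right _ ?_
      unfold Cgraph.blockWeight
      split_ifs <;> simp
    · refine mem_union_left _ ?_
      rw [mem_spectrum_iff_isRoot_charpoly] at hQ
      exact Multiset.mem_toFinset.mpr ((Polynomial.mem_roots Q.charpoly_monic.ne_zero).mpr hQ)
end

section
/- The eccentricity spectrum of the graph G = K_{α₁} ∨ α₂K₁ (join of a complete graph on α₁ vertices with α₂ isolated vertices, i.e., C(α₁,α₂)) is: -1 with multiplicity α₁ - 1, -2 with multiplicity α₂ - 1, and the two simple eigenvalues α₁ + α₂ - 2 - (α₁-1)/2 ± √((α₁ - α₂ - (α₁-1)/2)² + α₁α₂). -/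
open Finset Matrix

/-- Geometric multiplicity of `μ` as an eigenvalue of `M`. -/
noncomputable def eigMult {n : Type*} [Fintype n] [DecidableEq n]
    (M : Matrix n n ℝ) (μ : ℝ) : ℕ :=
  Module.finrank ℝ (LinearMap.ker (Matrix.toLin' (M - μ • (1 : Matrix n n ℝ))))

/-!
Every vertex of the first block dominates the graph, so two distinct vertices are at distance 2
when both lie in the second block and at distance 1 otherwise, and the eccentricities are 1 and 2
on the two blocks. Hence `ε(G)` has the block form `[[J - I, J], [J, 2(J - I)]]`. Its
`-1`-eigenvectors are the vectors supported on the first block with zero sum, its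
`-2`-eigenvectors those supported on the second block with zero sum, and every other eigenvector
is constant on both blocks, so that its eigenvalue is a root of the characteristic polynomial
`(μ + 1 - α₀)(μ + 2 - 2α₁) - α₀α₁` of the quotient matrix `[[α₀ - 1, α₁], [α₀, 2α₁ - 2]]`.
-/

lemma ecc_eq_of_forall_dist_le {V : Type*} [Fintype V] {G : SimpleGraph V} {v : V} {k : ℕ}
    (hle : ∀ u, G.dist v u ≤ k) (u : V) (hu : G.dist v u = k) : ecc G v = k :=
  le_antisymm (Finset.sup_le fun u _ => hle u) (hu ▸ Finset.le_sup (mem_univ u))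

lemma mulVec_sigma_offDiag {ι : Type*} [Fintype ι] [DecidableEq ι] {κ : ι → Type*}
    [∀ i, Fintype (κ i)] [∀ i, DecidableEq (κ i)] {R : Type*} [CommRing R]
    (w : ι → ι → R) (x : (Σ i, κ i) → R) (u : Σ i, κ i) :
    (of (fun u v : Σ i, κ i => if u = v then 0 else w u.1 v.1) *ᵥ x) u =
      ∑ i, w u.1 i * ∑ j, x ⟨i, j⟩ - w u.1 u.1 * x u := by
  simp only [mulVec, dotProduct, of_apply, ite_mul, zero_mul]
  rw [Finset.sum_ite, Finset.sum_const_zero, zero_add, Finset.filter_ne,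
    Finset.sum_erase_eq_sub (mem_univ u), Fintype.sum_sigma]
  simp only [Finset.mul_sum]

lemma mem_ker_toLin'_sub_smul_one_iff {n R : Type*} [Fintype n] [DecidableEq n] [CommRing R]
    (M : Matrix n n R) (μ : R) (x : n → R) :
    x ∈ LinearMap.ker (toLin' (M - μ • (1 : Matrix n n R))) ↔ M *ᵥ x = μ • x := by
  rw [LinearMap.mem_ker, toLin'_apply, sub_mulVec, smul_mulVec, one_mulVec, sub_eq_zero]

lemma finrank_ker_sum_proj {K ι : Type*} [Field K] [Fintype ι] [DecidableEq ι] [Nonempty ι] :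
    Module.finrank K (LinearMap.ker (∑ i, LinearMap.proj i : (ι → K) →ₗ[K] K)) =
      Fintype.card ι - 1 := by
  have hne : (∑ i, LinearMap.proj i : (ι → K) →ₗ[K] K) ≠ 0 := fun h => by
    simpa using LinearMap.congr_fun h (Pi.single (Classical.arbitrary ι) 1)
  have := Module.Dual.finrank_ker_add_one_of_ne_zero hne
  rw [Module.finrank_fintype_fun_eq_card] at this
  omega

lemma sub_sq_eq_iff_eq_add_sqrt_or_eq_sub_sqrt {x m k : ℝ} (hk : 0 ≤ k) :
    (x - m) ^ 2 = k ↔ x = m + √k ∨ x = m - √k := by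
  rw [← Real.sq_sqrt hk, sq_eq_sq_iff_eq_or_eq_neg, Real.sq_sqrt hk, sub_eq_iff_eq_add',
    sub_eq_iff_eq_add', ← sub_eq_add_neg]

lemma sub_mul_sub_eq_mul_iff {a b : ℝ} (hab : 0 ≤ a * b) (μ : ℝ) :
    (μ + 1 - a) * (μ + 2 - 2 * b) = a * b ↔
      μ = a + b - 2 - (a - 1) / 2 + √((a - b - (a - 1) / 2) ^ 2 + a * b) ∨
      μ = a + b - 2 - (a - 1) / 2 - √((a - b - (a - 1) / 2) ^ 2 + a * b) := by
  rw [← sub_sq_eq_iff_eq_add_sqrt_or_eq_sub_sqrt (by positivity)]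
  constructor <;> intro h <;> linear_combination h

section CgraphTwo

variable {α : Fin 2 → ℕ}

lemma Cgraph_two_adj_iff {u v : Σ i : Fin 2, Fin (α i)} :
    (Cgraph 2 α).Adj u v ↔ u ≠ v ∧ (u.1 = 0 ∨ v.1 = 0) := by
  obtain ⟨i, j⟩ := u
  obtain ⟨k, l⟩ := v
  fin_cases i <;> fin_cases k <;> simp [Cgraph]

lemma Cgraph_two_dist (h1 : 1 ≤ α 0) (u v : Σ i : Fin 2, Fin (α i)) :
    (Cgraph 2 α).dist u v = if u = v then 0 else if u.1 = 1 ∧ v.1 = 1 then 2 else 1 := by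
  split_ifs with huv hblock
  · rw [huv, SimpleGraph.dist_self]
  · have hdom : ∀ w : Σ i : Fin 2, Fin (α i), w.1 = 1 → (Cgraph 2 α).Adj w ⟨0, ⟨0, h1⟩⟩ :=
      fun w hw => Cgraph_two_adj_iff.2 ⟨fun h => by simp [h] at hw, Or.inr rfl⟩
    have hnadj : ¬ (Cgraph 2 α).Adj u v := by simp [Cgraph_two_adj_iff, hblock]
    rw [SimpleGraph.dist, SimpleGraph.edist_eq_two_iff.2
      ⟨huv, hnadj, ⟨_, hdom u hblock.1, hdom v hblock.2⟩⟩]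
    rfl
  · refine SimpleGraph.dist_eq_one_iff_adj.2 (Cgraph_two_adj_iff.2 ⟨huv, ?_⟩)
    omega

lemma Cgraph_two_ecc (h1 : 1 ≤ α 0) (h2 : 2 ≤ α 1) (v : Σ i : Fin 2, Fin (α i)) :
    ecc (Cgraph 2 α) v = v.1 + 1 := by
  match v with
  | ⟨0, j⟩ =>
    refine ecc_eq_of_forall_dist_le (fun u => ?_) ⟨1, ⟨0, by omega⟩⟩ (by simp [Cgraph_two_dist h1])
    rw [Cgraph_two_dist h1]
    split_ifs <;> simp_all
  | ⟨1, j⟩ =>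
    have : Nontrivial (Fin (α 1)) := Fin.nontrivial_iff_two_le.2 h2
    obtain ⟨j', hj'⟩ := exists_ne j
    refine ecc_eq_of_forall_dist_le (fun u => ?_) ⟨1, j'⟩ (by simp [Cgraph_two_dist h1, hj'.symm])
    rw [Cgraph_two_dist h1]
    split_ifs <;> simp

lemma eccMatrix_Cgraph_two (h1 : 1 ≤ α 0) (h2 : 2 ≤ α 1) :
    eccMatrix (Cgraph 2 α) =
      of fun u v => if u = v then 0 else ![![1, 1], ![1, 2]] u.1 v.1 := by
  ext ⟨i, j⟩ ⟨k, l⟩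
  fin_cases i <;> fin_cases k <;>
    simp [eccMatrix, Cgraph_two_dist h1, Cgraph_two_ecc h1 h2]

lemma eccMatrix_Cgraph_two_mulVec_eq_smul_iff (h1 : 1 ≤ α 0) (h2 : 2 ≤ α 1) (μ : ℝ)
    (x : (Σ i : Fin 2, Fin (α i)) → ℝ) :
    eccMatrix (Cgraph 2 α) *ᵥ x = μ • x ↔
      (∀ j, (μ + 1) * x ⟨0, j⟩ = ∑ k, x ⟨0, k⟩ + ∑ k, x ⟨1, k⟩) ∧
      (∀ j, (μ + 2) * x ⟨1, j⟩ = ∑ k, x ⟨0, k⟩ + 2 * ∑ k, x ⟨1, k⟩) := by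
  rw [eccMatrix_Cgraph_two h1 h2, funext_iff, Sigma.forall, Fin.forall_fin_two]
  refine and_congr (forall_congr' fun j => ?_) (forall_congr' fun j => ?_) <;>
    simp only [mulVec_sigma_offDiag, Fin.sum_univ_two, Pi.smul_apply, smul_eq_mul] <;>
    norm_num <;> constructor <;> intro h <;> linarith

variable (α) in
def blockSplit : ((Σ i : Fin 2, Fin (α i)) → ℝ) ≃ₗ[ℝ] (Fin (α 0) → ℝ) × (Fin (α 1) → ℝ) :=
  (LinearEquiv.piCurry ℝ fun _ _ => ℝ).trans (LinearEquiv.piFinTwo ℝ fun i => Fin (α i) → ℝ)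

@[simp] lemma blockSplit_symm_apply_zero (p : (Fin (α 0) → ℝ) × (Fin (α 1) → ℝ))
    (j : Fin (α 0)) : (blockSplit α).symm p ⟨0, j⟩ = p.1 j := rfl

@[simp] lemma blockSplit_symm_apply_one (p : (Fin (α 0) → ℝ) × (Fin (α 1) → ℝ))
    (j : Fin (α 1)) : (blockSplit α).symm p ⟨1, j⟩ = p.2 j := rfl

variable (α) in
noncomputable def splitEigenspace (μ : ℝ) : Submodule ℝ ((Fin (α 0) → ℝ) × (Fin (α 1) → ℝ)) :=
  (LinearMap.ker (toLin' (eccMatrix (Cgraph 2 α) - μ • 1))).map (blockSplit α).toLinearMap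

lemma eigMult_eccMatrix_Cgraph_two (μ : ℝ) :
    eigMult (eccMatrix (Cgraph 2 α)) μ = Module.finrank ℝ (splitEigenspace α μ) :=
  (LinearEquiv.finrank_map_eq (blockSplit α) _).symm

lemma mem_splitEigenspace_iff (h1 : 1 ≤ α 0) (h2 : 2 ≤ α 1) (μ : ℝ)
    (p : (Fin (α 0) → ℝ) × (Fin (α 1) → ℝ)) :
    p ∈ splitEigenspace α μ ↔
      (∀ j, (μ + 1) * p.1 j = ∑ k, p.1 k + ∑ k, p.2 k) ∧
      (∀ j, (μ + 2) * p.2 j = ∑ k, p.1 k + 2 * ∑ k, p.2 k) := by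
  rw [splitEigenspace, Submodule.mem_map_equiv, mem_ker_toLin'_sub_smul_one_iff,
    eccMatrix_Cgraph_two_mulVec_eq_smul_iff h1 h2]
  simp only [blockSplit_symm_apply_zero, blockSplit_symm_apply_one]

lemma splitEigenspace_neg_one (h1 : 1 ≤ α 0) (h2 : 2 ≤ α 1) :
    splitEigenspace α (-1) =
      (LinearMap.ker (∑ j, LinearMap.proj j : (Fin (α 0) → ℝ) →ₗ[ℝ] ℝ)).map
        (LinearMap.inl ℝ _ (Fin (α 1) → ℝ)) := by
  ext ⟨a, b⟩
  rw [mem_splitEigenspace_iff h1 h2]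
  simp only [Submodule.mem_map, LinearMap.mem_ker, LinearMap.inl_apply, Prod.mk.injEq,
    LinearMap.coe_sum, LinearMap.coe_proj, Finset.sum_apply, Function.eval]
  constructor
  · rintro ⟨ha, hb⟩
    have hab : ∑ k, a k + ∑ k, b k = 0 := by linarith [ha ⟨0, h1⟩]
    have hb_const : ∀ j, b j = ∑ k, b k := fun j => by linarith [hb j]
    have hb_sum : ∑ k, b k = 0 := by
      have hsum : (α 1 : ℝ) * ∑ k, b k = ∑ k, b k := by
        simpa using (Finset.sum_eq_card_nsmul (s := univ) fun j _ => hb_const j).symm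
      exact (mul_left_eq_self₀.1 hsum).resolve_left (by norm_cast; omega)
    exact ⟨a, by linarith, rfl, funext fun j => by rw [hb_const j, hb_sum, Pi.zero_apply]⟩
  · rintro ⟨a, ha, rfl, rfl⟩
    simp [ha]

lemma splitEigenspace_neg_two (h1 : 1 ≤ α 0) (h2 : 2 ≤ α 1) :
    splitEigenspace α (-2) =
      (LinearMap.ker (∑ j, LinearMap.proj j : (Fin (α 1) → ℝ) →ₗ[ℝ] ℝ)).map
        (LinearMap.inr ℝ (Fin (α 0) → ℝ) _) := by
  ext ⟨a, b⟩
  rw [mem_splitEigenspace_iff h1 h2]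
  simp only [Submodule.mem_map, LinearMap.mem_ker, LinearMap.inr_apply, Prod.mk.injEq,
    LinearMap.coe_sum, LinearMap.coe_proj, Finset.sum_apply, Function.eval]
  constructor
  · rintro ⟨ha, hb⟩
    have hab : ∑ k, a k + 2 * ∑ k, b k = 0 := by linarith [hb ⟨0, by omega⟩]
    have ha_const : ∀ j, a j = ∑ k, b k := fun j => by linarith [ha j]
    have hb_sum : ∑ k, b k = 0 := by
      have hsum : ∑ k, a k = (α 0 : ℝ) * ∑ k, b k := by
        simpa using Finset.sum_eq_card_nsmul (s := univ) fun j _ => ha_const j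
      have : ((α 0 : ℝ) + 2) * ∑ k, b k = 0 := by linear_combination hab - hsum
      exact (mul_eq_zero.1 this).resolve_left (by positivity)
    exact ⟨b, hb_sum, funext fun j => by rw [ha_const j, hb_sum, Pi.zero_apply], rfl⟩
  · rintro ⟨b, hb, rfl, rfl⟩
    simp [hb]

lemma mem_splitEigenspace_iff_of_ne (h1 : 1 ≤ α 0) (h2 : 2 ≤ α 1) {μ : ℝ} (hμ1 : μ + 1 ≠ 0)
    (hμ2 : μ + 2 ≠ 0) (p : (Fin (α 0) → ℝ) × (Fin (α 1) → ℝ)) :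
    p ∈ splitEigenspace α μ ↔
      ∃ c d : ℝ, p = (fun _ => c, fun _ => d) ∧
        (μ + 1 - α 0) * c = α 1 * d ∧ (μ + 2 - 2 * α 1) * d = α 0 * c := by
  rw [mem_splitEigenspace_iff h1 h2]
  constructor
  · rintro ⟨ha, hb⟩
    set c := (∑ k, p.1 k + ∑ k, p.2 k) / (μ + 1)
    set d := (∑ k, p.1 k + 2 * ∑ k, p.2 k) / (μ + 2)
    have ha_const : ∀ j, p.1 j = c := fun j => by rw [eq_div_iff hμ1, mul_comm, ha j]
    have hb_const : ∀ j, p.2 j = d := fun j => by rw [eq_div_iff hμ2, mul_comm, hb j]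
    have hsa : ∑ k, p.1 k = α 0 * c := by simp [ha_const]
    have hsb : ∑ k, p.2 k = α 1 * d := by simp [hb_const]
    refine ⟨c, d, Prod.ext (funext ha_const) (funext hb_const), ?_, ?_⟩
    · linear_combination ha ⟨0, h1⟩ - (μ + 1) * ha_const ⟨0, h1⟩ + hsa + hsb
    · linear_combination hb ⟨0, by omega⟩ - (μ + 2) * hb_const ⟨0, by omega⟩ + hsa + 2 * hsb
  · rintro ⟨c, d, rfl, hc, hd⟩
    simp only [sum_const, card_univ, Fintype.card_fin, nsmul_eq_mul]
    exact ⟨fun _ => by linear_combination hc, fun _ => by linear_combination hd⟩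

lemma eigMult_eccMatrix_Cgraph_two_neg_one (h1 : 1 ≤ α 0) (h2 : 2 ≤ α 1) :
    eigMult (eccMatrix (Cgraph 2 α)) (-1) = α 0 - 1 := by
  have : Nonempty (Fin (α 0)) := Fin.pos_iff_nonempty.1 h1
  rw [eigMult_eccMatrix_Cgraph_two, splitEigenspace_neg_one h1 h2,
    ← (Submodule.equivMapOfInjective _ LinearMap.inl_injective _).finrank_eq,
    finrank_ker_sum_proj, Fintype.card_fin]

lemma eigMult_eccMatrix_Cgraph_two_neg_two (h1 : 1 ≤ α 0) (h2 : 2 ≤ α 1) :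
    eigMult (eccMatrix (Cgraph 2 α)) (-2) = α 1 - 1 := by
  have : Nonempty (Fin (α 1)) := Fin.pos_iff_nonempty.1 (by omega)
  rw [eigMult_eccMatrix_Cgraph_two, splitEigenspace_neg_two h1 h2,
    ← (Submodule.equivMapOfInjective _ LinearMap.inr_injective _).finrank_eq,
    finrank_ker_sum_proj, Fintype.card_fin]

lemma eigMult_eccMatrix_Cgraph_two_eq_one (h1 : 1 ≤ α 0) (h2 : 2 ≤ α 1) {μ : ℝ}
    (hμ : (μ + 1 - α 0) * (μ + 2 - 2 * α 1) = α 0 * α 1) :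
    eigMult (eccMatrix (Cgraph 2 α)) μ = 1 := by
  have ha0 : (1 : ℝ) ≤ α 0 := by exact_mod_cast h1
  have ha1 : (2 : ℝ) ≤ α 1 := by exact_mod_cast h2
  have hμ1 : μ + 1 ≠ 0 := fun h => by
    rw [show μ = -1 by linarith] at hμ
    nlinarith
  have hμ2 : μ + 2 ≠ 0 := fun h => by
    rw [show μ = -2 by linarith] at hμ
    nlinarith
  set v : (Fin (α 0) → ℝ) × (Fin (α 1) → ℝ) := (fun _ => (α 1 : ℝ), fun _ => μ + 1 - α 0)
  have hv : v ≠ 0 := fun h => by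
    have := congr_fun (congr_arg Prod.fst h) ⟨0, h1⟩
    simp [v] at this
    omega
  have hspan : splitEigenspace α μ = Submodule.span ℝ {v} := by
    ext p
    rw [mem_splitEigenspace_iff_of_ne h1 h2 hμ1 hμ2, Submodule.mem_span_singleton]
    constructor
    · rintro ⟨c, d, rfl, hc, -⟩
      refine ⟨c / α 1, Prod.ext (funext fun _ => ?_) (funext fun _ => ?_)⟩
      · simp [v]
        field_simp
      · simp [v]
        field_simp
        linear_combination hc
    · rintro ⟨t, rfl⟩
      exact ⟨t * α 1, t * (μ + 1 - α 0), by ext <;> simp [v], by ring,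
        by linear_combination t * hμ⟩
  rw [eigMult_eccMatrix_Cgraph_two, hspan, finrank_span_singleton hv]

lemma eccMatrix_Cgraph_two_eigenvalue_cases (h1 : 1 ≤ α 0) (h2 : 2 ≤ α 1) {μ : ℝ}
    {x : (Σ i : Fin 2, Fin (α i)) → ℝ} (hx0 : x ≠ 0) (hx : eccMatrix (Cgraph 2 α) *ᵥ x = μ • x) :
    μ = -1 ∨ μ = -2 ∨ (μ + 1 - α 0) * (μ + 2 - 2 * α 1) = α 0 * α 1 := by
  by_cases hμ1 : μ + 1 = 0
  · exact Or.inl (by linarith)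
  by_cases hμ2 : μ + 2 = 0
  · exact Or.inr (Or.inl (by linarith))
  right; right
  have hmem : blockSplit α x ∈ splitEigenspace α μ :=
    Submodule.mem_map_of_mem ((mem_ker_toLin'_sub_smul_one_iff _ _ _).2 hx)
  obtain ⟨c, d, hcd, hc, hd⟩ := (mem_splitEigenspace_iff_of_ne h1 h2 hμ1 hμ2 _).1 hmem
  have hcd0 : c ≠ 0 ∨ d ≠ 0 := by
    by_contra! h
    apply hx0
    rw [← (blockSplit α).map_eq_zero_iff, hcd, h.1, h.2]
    rfl
  rcases hcd0 with hc0 | hd0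
  · refine mul_right_cancel₀ hc0 ?_
    linear_combination (μ + 2 - 2 * α 1) * hc + α 1 * hd
  · refine mul_right_cancel₀ hd0 ?_
    linear_combination (μ + 1 - α 0) * hd + α 0 * hc

end CgraphTwo

/-- The eccentricity spectrum of `G = K_{α₁} ∨ α₂K₁ = C(α₁, α₂)` (with
`α₂ ≥ 2`): `-1` with multiplicity `α₁ - 1`, `-2` with multiplicity `α₂ - 1`,
and the two simple eigenvalues
`α₁ + α₂ - 2 - (α₁-1)/2 ± √((α₁ - α₂ - (α₁-1)/2)² + α₁α₂)`;
moreover, these are all the eigenvalues. -/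
theorem stmt19 (α : Fin 2 → ℕ) (h1 : 1 ≤ α 0) (h2 : 2 ≤ α 1) :
    eigMult (eccMatrix (Cgraph 2 α)) (-1) = α 0 - 1 ∧
    eigMult (eccMatrix (Cgraph 2 α)) (-2) = α 1 - 1 ∧
    eigMult (eccMatrix (Cgraph 2 α))
      ((α 0 : ℝ) + (α 1 : ℝ) - 2 - ((α 0 : ℝ) - 1) / 2 +
        Real.sqrt (((α 0 : ℝ) - (α 1 : ℝ) - ((α 0 : ℝ) - 1) / 2) ^ 2 +
          (α 0 : ℝ) * (α 1 : ℝ))) = 1 ∧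
    eigMult (eccMatrix (Cgraph 2 α))
      ((α 0 : ℝ) + (α 1 : ℝ) - 2 - ((α 0 : ℝ) - 1) / 2 -
        Real.sqrt (((α 0 : ℝ) - (α 1 : ℝ) - ((α 0 : ℝ) - 1) / 2) ^ 2 +
          (α 0 : ℝ) * (α 1 : ℝ))) = 1 ∧
    ∀ μ : ℝ, (∃ x : (Σ i : Fin 2, Fin (α i)) → ℝ, x ≠ 0 ∧
        (eccMatrix (Cgraph 2 α)).mulVec x = μ • x) →
      μ ∈ ({-1, -2,
        (α 0 : ℝ) + (α 1 : ℝ) - 2 - ((α 0 : ℝ) - 1) / 2 +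
          Real.sqrt (((α 0 : ℝ) - (α 1 : ℝ) - ((α 0 : ℝ) - 1) / 2) ^ 2 +
            (α 0 : ℝ) * (α 1 : ℝ)),
        (α 0 : ℝ) + (α 1 : ℝ) - 2 - ((α 0 : ℝ) - 1) / 2 -
          Real.sqrt (((α 0 : ℝ) - (α 1 : ℝ) - ((α 0 : ℝ) - 1) / 2) ^ 2 +
            (α 0 : ℝ) * (α 1 : ℝ))} : Set ℝ) := by
  have hα : (0 : ℝ) ≤ α 0 * α 1 := by positivity
  refine ⟨eigMult_eccMatrix_Cgraph_two_neg_one h1 h2, eigMult_eccMatrix_Cgraph_two_neg_two h1 h2,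
    eigMult_eccMatrix_Cgraph_two_eq_one h1 h2 ((sub_mul_sub_eq_mul_iff hα _).2 (Or.inl rfl)),
    eigMult_eccMatrix_Cgraph_two_eq_one h1 h2 ((sub_mul_sub_eq_mul_iff hα _).2 (Or.inr rfl)), ?_⟩
  rintro μ ⟨x, hx0, hx⟩
  rcases eccMatrix_Cgraph_two_eigenvalue_cases h1 h2 hx0 hx with h | h | h
  · simp [h]
  · simp [h]
  · rcases (sub_mul_sub_eq_mul_iff hα μ).1 h with h | h <;> simp [h]
end
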